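/- arXiv:2006.00898 — 6 statements merged into one kernel-verified Lean document; each statement's English description precedes it below -/
import Mathlib

section
/- For every integer k ≥ 3 and every k-admissible integer n ≥ (k-1)² + 1, there exists a partial (n,k,1)-design with exactly (n-1)/(k-1) − k + 2 blocks that is not completable. -/
/-- An integer `n` is `k`-admissible if `k(k-1) ∣ n(n-1)` and `(k-1) ∣ (n-1)`. -/
def Admissible (k n : ℕ) : Prop := (k * (k - 1)) ∣ (n * (n - 1)) ∧ (k - 1) ∣ (n - 1)

/-- A partial `(n,k,1)`-design: all blocks have size `k` and every pair of distinct
points lies in at most one block. -/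
def IsPartialDesign (k n : ℕ) (𝒜 : Finset (Finset (Fin n))) : Prop :=
  (∀ A ∈ 𝒜, A.card = k) ∧
  ∀ x y : Fin n, x ≠ y → (𝒜.filter (fun A => x ∈ A ∧ y ∈ A)).card ≤ 1

/-- An `(n,k,1)`-design: all blocks have size `k` and every pair of distinct
points lies in exactly one block. -/
def IsDesign (k n : ℕ) (ℬ : Finset (Finset (Fin n))) : Prop :=
  (∀ A ∈ ℬ, A.card = k) ∧
  ∀ x y : Fin n, x ≠ y → (ℬ.filter (fun A => x ∈ A ∧ y ∈ A)).card = 1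

/-- A partial design is completable if it extends to a complete design. -/
def Completable (k n : ℕ) (𝒜 : Finset (Finset (Fin n))) : Prop :=
  ∃ ℬ : Finset (Finset (Fin n)), 𝒜 ⊆ ℬ ∧ IsDesign k n ℬ

/-! ### Auxiliary machinery -/

/-- Push a finset of naturals into `Fin n` (dropping out-of-range elements). -/
def toFinSet (n : ℕ) (s : Finset ℕ) : Finset (Fin n) :=
  (s.filter (· < n)).attachFin (fun _ hm => (Finset.mem_filter.mp hm).2)

lemma mem_toFinSet {n : ℕ} {s : Finset ℕ} {a : Fin n} : a ∈ toFinSet n s ↔ (a : ℕ) ∈ s := by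
  simp [toFinSet, Finset.mem_attachFin, a.isLt]

lemma card_toFinSet {n : ℕ} {s : Finset ℕ} (h : ∀ a ∈ s, a < n) :
    (toFinSet n s).card = s.card := by
  rw [toFinSet, Finset.card_attachFin, Finset.filter_true_of_mem h]

lemma subset_of_toFinSet_eq {n : ℕ} {s t : Finset ℕ} (hs : ∀ a ∈ s, a < n)
    (h : toFinSet n s = toFinSet n t) : s ⊆ t := by
  intro a ha
  have h1 : (⟨a, hs a ha⟩ : Fin n) ∈ toFinSet n s := mem_toFinSet.mpr ha
  rw [h] at h1
  exact mem_toFinSet.mp h1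

/-- In an `(n,k,1)`-design, each point lies in exactly `(n-1)/(k-1)` blocks. -/
lemma design_replication {k n : ℕ} {ℬ : Finset (Finset (Fin n))}
    (h : IsDesign k n ℬ) (x : Fin n) :
    (ℬ.filter (fun A => x ∈ A)).card * (k - 1) = n - 1 := by
  classical
  have key : ∀ y ∈ Finset.univ.erase x,
      (ℬ.filter (fun A => x ∈ A ∧ y ∈ A)).card = 1 := fun y hy =>
    h.2 x y (Ne.symm (Finset.mem_erase.mp hy).1)
  have h1 : ∑ y ∈ Finset.univ.erase x, (ℬ.filter (fun A => x ∈ A ∧ y ∈ A)).card = n - 1 := by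
    rw [Finset.sum_congr rfl key, Finset.sum_const, smul_eq_mul, mul_one,
        Finset.card_erase_of_mem (Finset.mem_univ x), Finset.card_univ, Fintype.card_fin]
  rw [← h1]
  have h2 : ∀ y, (ℬ.filter (fun A => x ∈ A ∧ y ∈ A)).card
      = ∑ A ∈ ℬ, if x ∈ A ∧ y ∈ A then 1 else 0 := fun y => Finset.card_filter _ _
  rw [Finset.sum_congr rfl (fun y _ => h2 y), Finset.sum_comm]
  have h3 : ∀ A ∈ ℬ, ∑ y ∈ Finset.univ.erase x, (if x ∈ A ∧ y ∈ A then 1 else 0)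
      = if x ∈ A then k - 1 else 0 := by
    intro A hA
    by_cases hx : x ∈ A
    · simp only [hx, true_and, if_pos]
      rw [← Finset.card_filter]
      have : (Finset.univ.erase x).filter (fun y => y ∈ A) = A.erase x := by
        ext y; simp [Finset.mem_erase, and_comm]
      rw [this, Finset.card_erase_of_mem hx, h.1 A hA]
    · simp [hx]
  rw [Finset.sum_congr rfl h3, ← Finset.sum_filter, Finset.sum_const, smul_eq_mul]

/-- `i`-th block through the point `0`: `{0} ∪ [1+ie, 1+ie+e)`. -/
def blkS (e i : ℕ) : Finset ℕ := insert 0 (Finset.Ico (1 + i * e) (1 + i * e + e))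

/-- The special block avoiding `0`: `[1+me, 1+me+k)`. -/
def blkB (e m k : ℕ) : Finset ℕ := Finset.Ico (1 + m * e) (1 + m * e + k)

lemma mem_blkS {e i x : ℕ} : x ∈ blkS e i ↔ x = 0 ∨ (1 + i * e ≤ x ∧ x < 1 + i * e + e) := by
  simp [blkS, Finset.mem_Ico]

lemma mem_blkB {e m k x : ℕ} : x ∈ blkB e m k ↔ 1 + m * e ≤ x ∧ x < 1 + m * e + k := by
  simp [blkB, Finset.mem_Ico]

lemma card_blkS (e i : ℕ) : (blkS e i).card = e + 1 := by
  rw [blkS, Finset.card_insert_of_notMem (by simp [Finset.mem_Ico]), Nat.card_Ico,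
    Nat.add_sub_cancel_left]

lemma card_blkB (e m k : ℕ) : (blkB e m k).card = k := by
  rw [blkB, Nat.card_Ico, Nat.add_sub_cancel_left]

lemma blkS_disj {e i j x : ℕ} (hij : i < j) (hi : x ∈ blkS e i) (hj : x ∈ blkS e j) :
    x = 0 := by
  rcases mem_blkS.mp hi with h | h
  · exact h
  rcases mem_blkS.mp hj with h' | h'
  · exact h'
  exfalso
  have hmul : (i + 1) * e ≤ j * e := Nat.mul_le_mul (by omega) le_rfl
  nlinarith [h.2, h'.1]

lemma blkS_blkB_disj {e m k i x : ℕ} (him : i < m) (hx : x ∈ blkS e i)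
    (hx' : x ∈ blkB e m k) : False := by
  have hmul : (i + 1) * e ≤ m * e := Nat.mul_le_mul (by omega) le_rfl
  have h2 := (mem_blkB.mp hx').1
  rcases mem_blkS.mp hx with h | h
  · subst h; simp at h2
  · nlinarith [h.2]

lemma blkS_lt {e m k n i x : ℕ} (hbound : 1 + m * e + k ≤ n) (him : i < m)
    (hx : x ∈ blkS e i) : x < n := by
  have hmul : (i + 1) * e ≤ m * e := Nat.mul_le_mul (by omega) le_rfl
  rcases mem_blkS.mp hx with h | h
  · subst h; linarith [Nat.zero_le (m * e), Nat.zero_le k]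
  · nlinarith [h.2]

lemma blkB_lt {e m k n x : ℕ} (hbound : 1 + m * e + k ≤ n) (hx : x ∈ blkB e m k) : x < n := by
  have := (mem_blkB.mp hx).2; linarith

lemma blkS_inj {e i j : ℕ} (he : 1 ≤ e) (h : blkS e i ⊆ blkS e j) : i = j := by
  by_contra hne
  have hmem : 1 + i * e ∈ blkS e i := mem_blkS.mpr (Or.inr ⟨le_rfl, by linarith⟩)
  have hmem' := h hmem
  rcases Nat.lt_or_ge i j with hij | hij
  · have := blkS_disj hij hmem hmem'; simp at this
  · have hji : j < i := by omega
    have := blkS_disj hji hmem' hmem; simp at this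

/-- For every `k ≥ 3` and every `k`-admissible `n ≥ (k-1)² + 1`, there is a partial
`(n,k,1)`-design with exactly `(n-1)/(k-1) - k + 2` blocks that is not completable.
(The block count is written as `|𝒜| + k = (n-1)/(k-1) + 2`.) -/
theorem uncompletable_partial_design_exists (k n : ℕ) (hk : 3 ≤ k)
    (hn : (k - 1) ^ 2 + 1 ≤ n) (hadm : Admissible k n) :
    ∃ 𝒜 : Finset (Finset (Fin n)), IsPartialDesign k n 𝒜 ∧
      𝒜.card + k = (n - 1) / (k - 1) + 2 ∧ ¬ Completable k n 𝒜 := by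
  classical
  obtain ⟨-, hd⟩ := hadm
  set e := k - 1 with he_def
  have he2 : 2 ≤ e := by omega
  have hek : e + 1 = k := by omega
  set r := (n - 1) / e with hr_def
  have hre : r * e = n - 1 := Nat.div_mul_cancel hd
  rw [pow_two] at hn
  have h1 : e * e ≤ n - 1 := by
    have := Nat.le_pred_of_lt (show e * e < n from hn)
    simpa using this
  have her : e ≤ r := by
    have h2 : e * e ≤ r * e := hre ▸ h1
    exact Nat.le_of_mul_le_mul_right h2 (by omega)
  set m := r - e with hm_def
  have hmer : m + e = r := by omega
  have hn0 : 0 < n := by omega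
  have hexp : m * e + e * e = n - 1 := by
    rw [← hre, ← hmer]; ring
  have hke : k ≤ e * e := by
    have h2e : 2 * e ≤ e * e := Nat.mul_le_mul he2 le_rfl
    linarith
  have hbound : 1 + m * e + k ≤ n := by
    have hn1' : n - 1 + 1 = n := by omega
    linarith
  -- the blocks
  have hBBcard : (toFinSet n (blkB e m k)).card = k := by
    rw [card_toFinSet (fun a ha => blkB_lt hbound ha), card_blkB]
  have hAcard : ∀ i, i < m → (toFinSet n (blkS e i)).card = k := by
    intro i him
    rw [card_toFinSet (fun a ha => blkS_lt hbound him ha), card_blkS]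
    omega
  have hAS_ne_B : ∀ i, i < m → toFinSet n (blkS e i) ≠ toFinSet n (blkB e m k) := by
    intro i him hEq
    have h0 : (0 : ℕ) ∈ blkB e m k :=
      subset_of_toFinSet_eq (fun a ha => blkS_lt hbound him ha) hEq
        (mem_blkS.mpr (Or.inl rfl))
    have := (mem_blkB.mp h0).1
    simp at this
  have hBB_not_img : toFinSet n (blkB e m k) ∉
      (Finset.range m).image (fun i => toFinSet n (blkS e i)) := by
    intro h
    obtain ⟨i, hi, hEq⟩ := Finset.mem_image.mp h
    exact hAS_ne_B i (Finset.mem_range.mp hi) hEq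
  have himg : ((Finset.range m).image (fun i => toFinSet n (blkS e i))).card = m := by
    rw [Finset.card_image_of_injOn, Finset.card_range]
    intro i hi j hj hEq
    exact blkS_inj (by omega)
      (subset_of_toFinSet_eq (fun a ha => blkS_lt hbound (Finset.mem_range.mp hi) ha) hEq)
  refine ⟨insert (toFinSet n (blkB e m k))
      ((Finset.range m).image (fun i => toFinSet n (blkS e i))), ⟨?_, ?_⟩, ?_, ?_⟩
  · -- all blocks have size k
    intro C hC
    rcases Finset.mem_insert.mp hC with rfl | h
    · exact hBBcard
    · obtain ⟨i, hi, rfl⟩ := Finset.mem_image.mp h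
      exact hAcard i (Finset.mem_range.mp hi)
  · -- pairs in at most one block
    intro x y hxy
    rw [Finset.card_le_one]
    intro C hC D hD
    obtain ⟨hC𝒜, hxC, hyC⟩ := Finset.mem_filter.mp hC
    obtain ⟨hD𝒜, hxD, hyD⟩ := Finset.mem_filter.mp hD
    rcases Finset.mem_insert.mp hC𝒜 with rfl | hCim
    · rcases Finset.mem_insert.mp hD𝒜 with rfl | hDim
      · rfl
      · obtain ⟨j, hj, rfl⟩ := Finset.mem_image.mp hDim
        exact (blkS_blkB_disj (Finset.mem_range.mp hj)
          (mem_toFinSet.mp hxD) (mem_toFinSet.mp hxC)).elim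
    · rcases Finset.mem_insert.mp hD𝒜 with rfl | hDim
      · obtain ⟨i, hi, rfl⟩ := Finset.mem_image.mp hCim
        exact (blkS_blkB_disj (Finset.mem_range.mp hi)
          (mem_toFinSet.mp hxC) (mem_toFinSet.mp hxD)).elim
      · obtain ⟨i, hi, rfl⟩ := Finset.mem_image.mp hCim
        obtain ⟨j, hj, rfl⟩ := Finset.mem_image.mp hDim
        rcases lt_trichotomy i j with hij | hij | hij
        · exfalso
          have hx0 : (x : ℕ) = 0 :=
            blkS_disj hij (mem_toFinSet.mp hxC) (mem_toFinSet.mp hxD)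
          have hy0 : (y : ℕ) = 0 :=
            blkS_disj hij (mem_toFinSet.mp hyC) (mem_toFinSet.mp hyD)
          exact hxy (Fin.val_injective (hx0.trans hy0.symm))
        · rw [hij]
        · exfalso
          have hx0 : (x : ℕ) = 0 :=
            blkS_disj hij (mem_toFinSet.mp hxD) (mem_toFinSet.mp hxC)
          have hy0 : (y : ℕ) = 0 :=
            blkS_disj hij (mem_toFinSet.mp hyD) (mem_toFinSet.mp hyC)
          exact hxy (Fin.val_injective (hx0.trans hy0.symm))
  · -- block count
    rw [Finset.card_insert_of_notMem hBB_not_img, himg]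
    omega
  · -- not completable
    rintro ⟨ℬ, hsub, hBd⟩
    have hBBℬ : toFinSet n (blkB e m k) ∈ ℬ := hsub (Finset.mem_insert_self _ _)
    set x0 : Fin n := ⟨0, hn0⟩ with hx0_def
    have hx0val : (x0 : ℕ) = 0 := rfl
    have hrep := design_replication hBd x0
    rw [← he_def] at hrep
    set T := ℬ.filter (fun A => x0 ∈ A) with hT_def
    have hTcard : T.card = r := by
      have h2 : T.card * e = r * e := by rw [hrep, hre]
      exact Nat.eq_of_mul_eq_mul_right (by omega) h2
    have hAsT : ((Finset.range m).image fun i => toFinSet n (blkS e i)) ⊆ T := by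
      intro C hC
      obtain ⟨i, hi, rfl⟩ := Finset.mem_image.mp hC
      refine Finset.mem_filter.mpr ⟨hsub (Finset.mem_insert_of_mem hC), ?_⟩
      exact mem_toFinSet.mpr (mem_blkS.mpr (Or.inl hx0val))
    set U := T \ ((Finset.range m).image fun i => toFinSet n (blkS e i)) with hU_def
    have hUcard : U.card = e := by
      rw [hU_def, Finset.card_sdiff_of_subset hAsT, hTcard, himg]
      omega
    -- every point of BB lies in some block of U
    have hcov : ∀ b : Fin n, b ∈ toFinSet n (blkB e m k) → ∃ C ∈ U, b ∈ C := by
      intro b hb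
      have hbval : (b : ℕ) ∈ blkB e m k := mem_toFinSet.mp hb
      have hbx0 : x0 ≠ b := by
        intro hEq
        rw [← hEq] at hbval
        have := (mem_blkB.mp hbval).1
        rw [hx0val] at this
        simp at this
      obtain ⟨C, hCeq⟩ := Finset.card_eq_one.mp (hBd.2 x0 b hbx0)
      have hCmem : C ∈ ℬ.filter (fun A => x0 ∈ A ∧ b ∈ A) := by
        rw [hCeq]; exact Finset.mem_singleton_self C
      obtain ⟨hCℬ, hx0C, hbC⟩ := Finset.mem_filter.mp hCmem
      refine ⟨C, Finset.mem_sdiff.mpr ⟨Finset.mem_filter.mpr ⟨hCℬ, hx0C⟩, ?_⟩, hbC⟩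
      intro hCim
      obtain ⟨i, hi, rfl⟩ := Finset.mem_image.mp hCim
      exact blkS_blkB_disj (Finset.mem_range.mp hi) (mem_toFinSet.mp hbC) hbval
    -- each block of U meets BB in at most one point
    have hsmall : ∀ C ∈ U, (C ∩ toFinSet n (blkB e m k)).card ≤ 1 := by
      intro C hC
      obtain ⟨hCT, -⟩ := Finset.mem_sdiff.mp hC
      obtain ⟨hCℬ, hx0C⟩ := Finset.mem_filter.mp hCT
      rw [Finset.card_le_one]
      intro a ha b hb
      by_contra hab
      obtain ⟨haC, haB⟩ := Finset.mem_inter.mp ha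
      obtain ⟨hbC, hbB⟩ := Finset.mem_inter.mp hb
      have hCne : C ≠ toFinSet n (blkB e m k) := by
        intro hEq
        rw [hEq] at hx0C
        have h3 := (mem_blkB.mp (mem_toFinSet.mp hx0C)).1
        rw [hx0val] at h3
        simp at h3
      have h2 : 1 < (ℬ.filter (fun A => a ∈ A ∧ b ∈ A)).card :=
        Finset.one_lt_card.mpr ⟨C, Finset.mem_filter.mpr ⟨hCℬ, haC, hbC⟩,
          toFinSet n (blkB e m k), Finset.mem_filter.mpr ⟨hBBℬ, haB, hbB⟩, hCne⟩
      rw [hBd.2 a b hab] at h2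
      exact lt_irrefl 1 h2
    have hsubB : toFinSet n (blkB e m k) ⊆
        U.biUnion (fun C => C ∩ toFinSet n (blkB e m k)) := by
      intro b hb
      obtain ⟨C, hC, hbC⟩ := hcov b hb
      exact Finset.mem_biUnion.mpr ⟨C, hC, Finset.mem_inter.mpr ⟨hbC, hb⟩⟩
    have hk_le : k ≤ e := by
      calc k = (toFinSet n (blkB e m k)).card := hBBcard.symm
        _ ≤ (U.biUnion (fun C => C ∩ toFinSet n (blkB e m k))).card :=
            Finset.card_le_card hsubB
        _ ≤ ∑ C ∈ U, (C ∩ toFinSet n (blkB e m k)).card := Finset.card_biUnion_le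
        _ ≤ ∑ C ∈ U, 1 := Finset.sum_le_sum hsmall
        _ = e := by rw [Finset.sum_const, smul_eq_mul, mul_one, hUcard]
    omega
end

section
/- Let k ≥ 3 be an integer such that k divides s² − s − 1 for some positive integer s. Then for n = s(k−1) + 2 there exists a K_k-divisible graph G of order n whose complement has exactly n − (k+1)/2 edges and which has no K_k-decomposition. -/
/-- A graph is `K_k`-divisible if `k(k-1)/2` divides its number of edges and `k-1`
divides every vertex degree. -/
def KkDivisible {V : Type*} (k : ℕ) (G : SimpleGraph V) : Prop :=
  (k * (k - 1) / 2) ∣ G.edgeSet.ncard ∧ ∀ x : V, (k - 1) ∣ (G.neighborSet x).ncard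

/-- A `K_k`-decomposition of `G`: a set of `k`-cliques of `G` (i.e. subgraphs
isomorphic to `K_k`) such that every edge of `G` lies in exactly one of them. -/
def HasKkDecomposition {V : Type*} (k : ℕ) (G : SimpleGraph V) : Prop :=
  ∃ D : Set (Finset V),
    (∀ A ∈ D, A.card = k ∧ ∀ x ∈ A, ∀ y ∈ A, x ≠ y → G.Adj x y) ∧
    (∀ x y : V, G.Adj x y → ∃! A, A ∈ D ∧ x ∈ A ∧ y ∈ A)

/-!
The graph `G` is the complement of a star joining vertex `0` to the vertices `≥ k`, together
with the perfect matching `2i - 1 ~ 2i` on `1, …, k - 1` (`k` is odd because `s² - s - 1` is).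
Then `0` has degree `k - 1` in `G` and every other vertex degree `n - 2 = s(k - 1)`, and
`2 |E(G)| = (k - 1)(s²(k - 1) + s + 1)`, where `s²(k - 1) + s + 1 = k s² - (s² - s - 1)` is
divisible by `k`. But a `K_k` through an edge at `0` must be the closed neighbourhood of `0`,
which misses the edge `12`.
-/

open Finset SimpleGraph

theorem not_hasKkDecomposition_of_degree_add_one_eq {V : Type*} [DecidableEq V]
    {G : SimpleGraph V} {k : ℕ} {v x y : V} [Fintype (G.neighborSet v)]
    (hv : G.degree v + 1 = k) (hx : G.Adj v x) (hy : G.Adj v y) (hxy : x ≠ y)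
    (hnxy : ¬ G.Adj x y) : ¬ HasKkDecomposition k G := by
  rintro ⟨D, hcliques, hunique⟩
  obtain ⟨A, ⟨hAD, hvA, hxA⟩, -⟩ := hunique v x hx
  obtain ⟨hAcard, hAclique⟩ := hcliques A hAD
  have hsub : A ⊆ insert v (G.neighborFinset v) := fun a ha => by
    rw [mem_insert, mem_neighborFinset]
    by_cases h : a = v
    · exact .inl h
    · exact .inr (hAclique v hvA a ha (Ne.symm h))
  have hA : A = insert v (G.neighborFinset v) :=
    eq_of_subset_of_card_le hsub (by rw [hAcard, ← hv]; exact card_insert_le _ _)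
  have hyA : y ∈ A := hA ▸ mem_insert_of_mem ((mem_neighborFinset _ _ _).2 hy)
  exact hnxy (hAclique x hxA y hyA hxy)

theorem SimpleGraph.ncard_edgeSet {V : Type*} [Fintype V]
    (G : SimpleGraph V) [DecidableRel G.Adj] : G.edgeSet.ncard = #G.edgeFinset := by
  rw [← coe_edgeFinset, Set.ncard_coe_finset]

theorem kkDivisible_iff {V : Type*} [Fintype V] {k : ℕ} (G : SimpleGraph V)
    [DecidableRel G.Adj] :
    KkDivisible k G ↔ k * (k - 1) / 2 ∣ #G.edgeFinset ∧ ∀ x, k - 1 ∣ G.degree x := by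
  simp only [KkDivisible, G.ncard_edgeSet, Set.ncard_eq_toFinset_card', degree,
    neighborFinset_def]

theorem Int.odd_of_dvd_sq_sub_self_sub_one {k s : ℤ} (h : k ∣ s ^ 2 - s - 1) : Odd k := by
  obtain ⟨t, ht⟩ := h
  have hodd : Odd (s ^ 2 - s - 1) := by
    rw [show s ^ 2 - s - 1 = s * (s - 1) - 1 by ring]
    exact s.even_mul_pred_self.sub_odd odd_one
  exact (Int.odd_mul.mp (ht ▸ hodd)).1

theorem mul_pred_div_two_dvd_of_two_mul_eq {k s e : ℕ} (hk : 0 < k)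
    (hdvd : (k : ℤ) ∣ (s : ℤ) ^ 2 - s - 1)
    (he : 2 * e = (k - 1) + (s * (k - 1) + 1) * (s * (k - 1))) : k * (k - 1) / 2 ∣ e := by
  have hfactor : 2 * e = (k - 1) * (s ^ 2 * (k - 1) + s + 1) := by rw [he]; ring
  have hk_dvd : k ∣ s ^ 2 * (k - 1) + s + 1 := by
    have hcast : ((s ^ 2 * (k - 1) + s + 1 : ℕ) : ℤ) = k * s ^ 2 - ((s : ℤ) ^ 2 - s - 1) := by
      push_cast [Nat.cast_sub hk]
      ring
    exact Int.natCast_dvd_natCast.mp (hcast ▸ dvd_sub (dvd_mul_right _ _) hdvd)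
  obtain ⟨c, hc⟩ := (Nat.even_mul_pred_self k).two_dvd
  rw [hc, Nat.mul_div_cancel_left _ two_pos]
  refine (mul_dvd_mul_iff_left two_ne_zero).mp ?_
  rw [← hc, hfactor, mul_comm k]
  exact mul_dvd_mul_left _ hk_dvd

def starMatching (n k : ℕ) : SimpleGraph (Fin n) :=
  fromRel fun x y =>
    (x.val = 0 ∧ k ≤ y.val) ∨ (x.val % 2 = 1 ∧ y.val = x.val + 1 ∧ y.val < k)

namespace starMatching

variable {n k : ℕ}

theorem adj_iff {x y : Fin n} : (starMatching n k).Adj x y ↔ x.val ≠ y.val ∧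
    ((x.val = 0 ∧ k ≤ y.val) ∨ (x.val % 2 = 1 ∧ y.val = x.val + 1 ∧ y.val < k) ∨
      (y.val = 0 ∧ k ≤ x.val) ∨ (y.val % 2 = 1 ∧ x.val = y.val + 1 ∧ x.val < k)) := by
  simp only [starMatching, fromRel_adj, ne_eq, Fin.ext_iff, or_assoc]

instance : DecidableRel (starMatching n k).Adj := fun _ _ => decidable_of_iff' _ adj_iff

theorem degree_zero (hk : 0 < k) : (starMatching (n + 1) k).degree 0 = n + 1 - k := by
  have hnbr : (starMatching (n + 1) k).neighborFinset 0 =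
      ({y | ¬ y.val < k} : Finset (Fin (n + 1))) := by
    ext y
    simp only [mem_neighborFinset, adj_iff, mem_filter, mem_univ, true_and, Fin.val_zero]
    omega
  rw [degree, hnbr, filter_not, card_sdiff_of_subset (filter_subset _ _), Fin.card_filter_val_lt,
    card_univ, Fintype.card_fin]
  omega

theorem degree_succ (hk : Odd k) (hkn : k ≤ n + 1) (i : Fin n) :
    (starMatching (n + 1) k).degree i.succ = 1 := by
  rw [degree_eq_one_iff_existsUnique_adj]
  have hk2 := Nat.odd_iff.mp hk
  have hi := i.isLt
  obtain ⟨w, hw⟩ : ∃ w : Fin (n + 1),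
      w.val = if k ≤ i.val + 1 then 0 else if i.val % 2 = 0 then i.val + 2 else i.val :=
    ⟨⟨if k ≤ i.val + 1 then 0 else if i.val % 2 = 0 then i.val + 2 else i.val,
      by split_ifs <;> omega⟩, rfl⟩
  refine ⟨w, ?_, fun y hy => ?_⟩
  · change (starMatching (n + 1) k).Adj i.succ w
    rw [adj_iff, Fin.val_succ]
    split_ifs at hw <;> omega
  · change (starMatching (n + 1) k).Adj i.succ y at hy
    rw [adj_iff, Fin.val_succ] at hy
    rw [Fin.ext_iff]
    split_ifs at hw <;> omega

theorem compl_degree_zero (hk : 0 < k) (hkn : k ≤ n + 1) :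
    (starMatching (n + 1) k)ᶜ.degree 0 = k - 1 := by
  rw [degree_compl, Fintype.card_fin, degree_zero hk]
  omega

theorem compl_degree_succ (hk : Odd k) (hkn : k ≤ n + 1) (i : Fin n) :
    (starMatching (n + 1) k)ᶜ.degree i.succ = n - 1 := by
  rw [degree_compl, Fintype.card_fin, degree_succ hk hkn]
  omega

theorem two_mul_card_edgeFinset (hk : Odd k) (hkn : k ≤ n + 1) :
    2 * #(starMatching (n + 1) k).edgeFinset = (n + 1 - k) + n := by
  simp [← sum_degrees_eq_twice_card_edges, Fin.sum_univ_succ, degree_zero hk.pos,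
    degree_succ hk hkn]

theorem two_mul_card_edgeFinset_compl (hk : Odd k) (hkn : k ≤ n + 1) :
    2 * #(starMatching (n + 1) k)ᶜ.edgeFinset = (k - 1) + n * (n - 1) := by
  simp [← sum_degrees_eq_twice_card_edges, Fin.sum_univ_succ, compl_degree_zero hk.pos hkn,
    compl_degree_succ hk hkn]

theorem not_hasKkDecomposition_compl (hk : 3 ≤ k) (hkn : k ≤ n + 1) :
    ¬ HasKkDecomposition k (starMatching (n + 1) k)ᶜ := by
  have h1 : 1 < n + 1 := by omega
  have h2 : 2 < n + 1 := by omega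
  refine not_hasKkDecomposition_of_degree_add_one_eq (v := 0) (x := ⟨1, h1⟩) (y := ⟨2, h2⟩)
    (by rw [compl_degree_zero (by omega) hkn]; omega) ?_ ?_ (by simp [Fin.ext_iff]) ?_ <;>
    simp only [compl_adj, adj_iff, ne_eq, Fin.ext_iff, Fin.val_zero, true_and] <;> omega

end starMatching

/-- If `k ≥ 3` divides `s² - s - 1` for some positive integer `s`, then for
`n = s(k-1) + 2` there is a `K_k`-divisible graph `G` of order `n` whose complement
has exactly `n - (k+1)/2` edges and which has no `K_k`-decomposition. -/
theorem nondecomposable_graph_exists (k s : ℕ) (hk : 3 ≤ k) (hs : 1 ≤ s)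
    (hdvd : (k : ℤ) ∣ ((s : ℤ) ^ 2 - (s : ℤ) - 1)) :
    ∃ G : SimpleGraph (Fin (s * (k - 1) + 2)), KkDivisible k G ∧
      ((Gᶜ.edgeSet.ncard : ℚ) = ((s * (k - 1) + 2 : ℕ) : ℚ) - ((k : ℚ) + 1) / 2) ∧
      ¬ HasKkDecomposition k G := by
  have hk_odd : Odd k := (Int.odd_coe_nat k).mp (Int.odd_of_dvd_sq_sub_self_sub_one hdvd)
  have hkn : k ≤ s * (k - 1) + 1 + 1 := by
    have := Nat.le_mul_of_pos_left (k - 1) hs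
    omega
  refine ⟨(starMatching (s * (k - 1) + 1 + 1) k)ᶜ, ?_, ?_,
    starMatching.not_hasKkDecomposition_compl hk hkn⟩
  · rw [kkDivisible_iff]
    refine ⟨mul_pred_div_two_dvd_of_two_mul_eq (by omega) hdvd
      (starMatching.two_mul_card_edgeFinset_compl hk_odd hkn), fun x => ?_⟩
    cases x using Fin.cases with
    | zero => rw [starMatching.compl_degree_zero (by omega) hkn]
    | succ i =>
      rw [starMatching.compl_degree_succ hk_odd hkn, Nat.add_sub_cancel]
      exact dvd_mul_left _ _
  · have hedges := starMatching.two_mul_card_edgeFinset hk_odd hkn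
    qify [hkn] at hedges
    rw [compl_compl, ncard_edgeSet]
    push_cast
    linarith
end

section
/- For each integer n ≥ 12 with n ≡ 0 (mod 6), there exists a K_3-divisible graph G of order n whose complement has exactly n edges and which has no K_3-decomposition. -/
/-!
Take `G` to be the complement of the graph on `Fin n` made of a star from `0` to `{7, …, n-1}`,
a `K₄` on `{1, 2, 3, 4}` and the edge `56`. That graph has `n` edges and only odd degrees, so for
`6 ∣ n` its complement is `K₃`-divisible. In `G` the vertex `0` has neighbourhood `{1, …, 6}`, in
which `{1, 2, 3, 4}` is independent. The triangles through `0` of a `K₃`-decomposition pair off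
the neighbours of `0` along edges of `G`, so each pair contains at most one of `1, 2, 3, 4`,
whereas there are only three pairs.
-/

open Finset SimpleGraph

section

variable {V : Type*} {G : SimpleGraph V}

theorem kkDivisible_three_iff [Fintype V] [DecidableRel G.Adj] :
    KkDivisible 3 G ↔ 3 ∣ #G.edgeFinset ∧ ∀ x, Even (G.degree x) := by
  rw [KkDivisible, ← coe_edgeFinset, Set.ncard_coe_finset]
  simp only [← card_neighborFinset_eq_degree, neighborFinset, Set.ncard_eq_toFinset_card',
    even_iff_two_dvd]
  rfl

theorem SimpleGraph.card_edgeFinset_add_card_edgeFinset_compl [Fintype V] [DecidableEq V]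
    [DecidableRel G.Adj] : #G.edgeFinset + #Gᶜ.edgeFinset = (Fintype.card V).choose 2 := by
  rw [← card_union_of_disjoint (disjoint_edgeFinset.2 disjoint_compl_right),
    ← card_edgeFinset_top_eq_card_choose_two]
  congr 1
  ext ⟨a, b⟩
  have := G.ne_of_adj (a := a) (b := b)
  simp only [mem_union, mem_edgeFinset, mem_edgeSet, compl_adj, ne_eq, edgeFinset_top,
    Set.toFinset_compl, mem_compl, Set.mem_toFinset, Sym2.mem_diagSet, Sym2.mk_isDiag_iff]
  tauto

theorem HasKkDecomposition.two_mul_card_le_degree [DecidableEq V] (hG : HasKkDecomposition 3 G)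
    {v : V} [Fintype (G.neighborSet v)] {S : Finset V} (hSv : S ⊆ G.neighborFinset v)
    (hS : G.IsIndepSet S) : 2 * #S ≤ G.degree v := by
  obtain ⟨D, hclique, hunique⟩ := hG
  -- `w ↦` the third vertex of the triangle through `v w` injects `S` into `N(v) \ S`.
  have key : #S ≤ #(G.neighborFinset v \ S) := by
    refine card_le_card_of_forall_subsingleton
      (fun w z => w ≠ z ∧ ∃ A ∈ D, v ∈ A ∧ w ∈ A ∧ z ∈ A) ?_ ?_
    · intro w hw
      have hvw : G.Adj v w := (mem_neighborFinset ..).1 (hSv hw)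
      obtain ⟨A, ⟨hA, hvA, hwA⟩, -⟩ := hunique v w hvw
      obtain ⟨hcard, hAcl⟩ := hclique A hA
      obtain ⟨z, hz, hzw⟩ := exists_mem_ne (s := A.erase v)
        (by rw [card_erase_of_mem hvA, hcard]; norm_num) w
      obtain ⟨hzv, hzA⟩ := mem_erase.1 hz
      refine ⟨z, mem_sdiff.2 ⟨(mem_neighborFinset ..).2 (hAcl v hvA z hzA hzv.symm),
        fun hzS => hS hzS hw hzw (hAcl z hzA w hwA hzw)⟩, hzw.symm, A, hA, hvA, hwA, hzA⟩
    · intro z hz w ⟨hw, hwz, A, hA, hvA, hwA, hzA⟩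
        w' ⟨hw', hw'z, A', hA', hvA', hw'A', hzA'⟩
      have hvz : G.Adj v z := (mem_neighborFinset ..).1 (mem_sdiff.1 hz).1
      obtain ⟨B, -, hB⟩ := hunique v z hvz
      obtain rfl : A = A' := (hB A ⟨hA, hvA, hzA⟩).trans (hB A' ⟨hA', hvA', hzA'⟩).symm
      have hpair : {v, z} ⊆ A := insert_subset hvA (singleton_subset_iff.2 hzA)
      have hrest : #(A \ {v, z}) ≤ 1 := by
        rw [card_sdiff_of_subset hpair, (hclique A hA).1, card_pair hvz.ne]
      have hvw : v ≠ w := G.ne_of_adj ((mem_neighborFinset ..).1 (hSv hw))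
      have hvw' : v ≠ w' := G.ne_of_adj ((mem_neighborFinset ..).1 (hSv hw'))
      exact card_le_one.1 hrest w (by simp [hwA, hvw.symm, hwz]) w'
        (by simp [hw'A', hvw'.symm, hw'z])
  have hSdeg := card_le_card hSv
  rw [card_sdiff_of_subset hSv, card_neighborFinset_eq_degree] at key
  rw [card_neighborFinset_eq_degree] at hSdeg
  omega

end

def starCliqueEdgeGraph (n : ℕ) : SimpleGraph (Fin n) :=
  fromRel fun u v => (u.val = 0 ∧ 7 ≤ v.val) ∨
    (1 ≤ u.val ∧ u.val ≤ 4 ∧ 1 ≤ v.val ∧ v.val ≤ 4) ∨ (u.val = 5 ∧ v.val = 6)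

section

variable {n : ℕ}

instance : DecidableRel (starCliqueEdgeGraph n).Adj :=
  inferInstanceAs (DecidableRel (fromRel _).Adj)

theorem starCliqueEdgeGraph_adj {u v : Fin n} :
    (starCliqueEdgeGraph n).Adj u v ↔ u.val ≠ v.val ∧
      ((u.val = 0 ∧ 7 ≤ v.val) ∨ (v.val = 0 ∧ 7 ≤ u.val) ∨
        (1 ≤ u.val ∧ u.val ≤ 4 ∧ 1 ≤ v.val ∧ v.val ≤ 4) ∨
        (u.val = 5 ∧ v.val = 6) ∨ (u.val = 6 ∧ v.val = 5)) := by
  simp only [starCliqueEdgeGraph, fromRel_adj, ne_eq, Fin.ext_iff]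
  omega

theorem degree_starCliqueEdgeGraph (hn : 7 < n) (v : Fin n) :
    (starCliqueEdgeGraph n).degree v =
      if v.val = 0 then n - 7 else if v.val ≤ 4 then 3 else 1 := by
  rw [← card_neighborFinset_eq_degree]
  rcases (by omega : v.val = 0 ∨ (1 ≤ v.val ∧ v.val ≤ 4) ∨ 5 ≤ v.val) with h | h | h
  · have : (starCliqueEdgeGraph n).neighborFinset v = Ici ⟨7, hn⟩ := by
      ext u
      simp only [mem_neighborFinset, starCliqueEdgeGraph_adj, mem_Ici, Fin.le_def]
      omega
    simp [this, h]
  · have : (starCliqueEdgeGraph n).neighborFinset v =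
        (Icc ⟨1, by omega⟩ ⟨4, by omega⟩).erase v := by
      ext u
      simp only [mem_neighborFinset, starCliqueEdgeGraph_adj, mem_erase, mem_Icc, Fin.le_def, ne_eq,
        Fin.ext_iff]
      omega
    rw [this, card_erase_of_mem (by simp [Fin.le_def]; omega), Fin.card_Icc, if_neg (by omega),
      if_pos h.2]
    rfl
  · have : (starCliqueEdgeGraph n).neighborFinset v =
        {⟨if v.val = 5 then 6 else if v.val = 6 then 5 else 0, by split_ifs <;> omega⟩} := by
      ext u
      simp only [mem_neighborFinset, starCliqueEdgeGraph_adj, mem_singleton, Fin.ext_iff]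
      split_ifs <;> omega
    simp [this, show v.val ≠ 0 by omega, show ¬ v.val ≤ 4 by omega]

theorem card_edgeFinset_starCliqueEdgeGraph (hn : 7 < n) :
    #(starCliqueEdgeGraph n).edgeFinset = n := by
  have hsum := sum_degrees_eq_twice_card_edges (starCliqueEdgeGraph n)
  simp only [degree_starCliqueEdgeGraph hn] at hsum
  rw [Fin.sum_univ_eq_sum_range
    (fun i => if i = 0 then n - 7 else if i ≤ 4 then 3 else 1)] at hsum
  obtain ⟨m, rfl⟩ : ∃ m, n = m + 5 := ⟨n - 5, by omega⟩
  simp only [Nat.reduceSubDiff, sum_range_succ', Nat.add_eq_zero_iff, one_ne_zero, and_false,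
    ↓reduceIte, Order.add_one_le_iff, add_assoc, Nat.reduceAdd, add_lt_iff_neg_right, not_lt_zero,
    sum_const, card_range, smul_eq_mul, mul_one, zero_add, Nat.lt_add_one, Nat.reduceLT,
    Nat.one_lt_ofNat, Nat.ofNat_pos] at hsum
  omega

theorem not_hasKkDecomposition_compl_starCliqueEdgeGraph (hn : 7 < n) :
    ¬ HasKkDecomposition 3 (starCliqueEdgeGraph n)ᶜ := by
  intro h
  have hle := h.two_mul_card_le_degree (v := ⟨0, by omega⟩)
    (S := Icc ⟨1, by omega⟩ ⟨4, by omega⟩)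
    (fun u hu => by
      simp only [mem_Icc, Fin.le_def] at hu
      simp only [mem_neighborFinset, compl_adj, starCliqueEdgeGraph_adj, ne_eq, Fin.ext_iff]
      omega)
    (fun u hu w hw huw hadj => by
      simp only [coe_Icc, Set.mem_Icc, Fin.le_def] at hu hw
      exact hadj.2 (starCliqueEdgeGraph_adj.2 ⟨Fin.val_ne_of_ne huw, by omega⟩))
  rw [degree_compl, degree_starCliqueEdgeGraph hn, Fintype.card_fin, Fin.card_Icc, if_pos rfl,
    Fin.val_mk, Fin.val_mk] at hle
  omega

theorem kkDivisible_compl_starCliqueEdgeGraph (hn : 7 < n) (h6 : n % 6 = 0) :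
    KkDivisible 3 (starCliqueEdgeGraph n)ᶜ := by
  rw [kkDivisible_three_iff]
  constructor
  · have hsum := card_edgeFinset_add_card_edgeFinset_compl (G := starCliqueEdgeGraph n)
    rw [card_edgeFinset_starCliqueEdgeGraph hn, Fintype.card_fin, Nat.choose_two_right] at hsum
    obtain ⟨m, rfl⟩ : ∃ m, n = 6 * m := ⟨n / 6, by omega⟩
    rw [show 6 * m * (6 * m - 1) = 6 * (m * (6 * m - 1)) by ring] at hsum
    omega
  · intro v
    rw [degree_compl, degree_starCliqueEdgeGraph hn, Fintype.card_fin, Nat.even_iff]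
    split_ifs <;> omega

end

/-- For each `n ≥ 12` with `n ≡ 0 (mod 6)` there is a `K_3`-divisible graph of order
`n` whose complement has exactly `n` edges and which has no `K_3`-decomposition. -/
theorem nondecomposable_K3_zero_mod_six (n : ℕ) (hn : 12 ≤ n) (hmod : n % 6 = 0) :
    ∃ G : SimpleGraph (Fin n), KkDivisible 3 G ∧
      Gᶜ.edgeSet.ncard = n ∧ ¬ HasKkDecomposition 3 G := by
  refine ⟨(starCliqueEdgeGraph n)ᶜ, kkDivisible_compl_starCliqueEdgeGraph (by omega) hmod, ?_,
    not_hasKkDecomposition_compl_starCliqueEdgeGraph (by omega)⟩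
  rw [compl_compl, ← coe_edgeFinset, Set.ncard_coe_finset,
    card_edgeFinset_starCliqueEdgeGraph (by omega)]
end

section
/- Let k and a be integers with k ≥ 3 and a ≥ 1, and let H be a graph of order a(k−1) such that the sum over all vertices x of H of ⌈(deg_H(x) − 1)/(k−1)⌉ is at most a − 2. Then H has a proper colouring with a colours such that each colour class has exactly k − 1 vertices. -/
/-!
Write `d_U(x)` (`degreeIn`) for the number of neighbours of `x` in `U` and
`σ(U) = ∑_{x ∈ U} ⌈(d_U(x) - 1)/m⌉` (`ceilDegreeSum`).
We peel off independent sets of size `m` one at a time, keeping `σ(U) + 2` at most the number of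
colours still to be used. If some `x₀ ∈ U` has `d_U(x₀) ≥ 2`, then only few vertices are `x₀`,
its neighbours or of degree at least two (their number is controlled by `σ(U)`), so at least
`2(m - 1)` vertices of degree at most one are not adjacent to `x₀`; a greedy choice among them
completes `x₀` to an independent set whose removal lowers `σ` by at least one. If all degrees are
at most one, any independent `m`-set will do as long as three or more colours remain, and with
two colours left `U` is a matching, which splits into two independent halves.
-/

open Finset

theorem Nat.sub_one_ceilDiv_eq_zero_iff {m : ℕ} (hm : 0 < m) (d : ℕ) :
    (d - 1) ⌈/⌉ m = 0 ↔ d ≤ 1 := by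
  rw [← Nat.le_zero, ceilDiv_le_iff_le_mul hm]
  omega

theorem Nat.one_le_sub_one_ceilDiv {m d : ℕ} (hm : 0 < m) (hd : 2 ≤ d) : 1 ≤ (d - 1) ⌈/⌉ m :=
  Nat.one_le_iff_ne_zero.2 fun h => by rw [Nat.sub_one_ceilDiv_eq_zero_iff hm] at h; omega

namespace SimpleGraph

variable {V : Type*} (G : SimpleGraph V)

def EquitablyColorableOn (U : Finset V) (a m : ℕ) : Prop :=
  ∃ φ : V → Fin a, (∀ x ∈ U, ∀ y ∈ U, G.Adj x y → φ x ≠ φ y) ∧ ∀ c, #{x ∈ U | φ x = c} = m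

variable {G}

theorem IsIndepSet.insert {s : Set V} {x : V} (hs : G.IsIndepSet s)
    (hx : ∀ y ∈ s, ¬G.Adj x y) : G.IsIndepSet (insert x s) :=
  Set.Pairwise.insert hs fun y hy _ => ⟨hx y hy, fun h => hx y hy h.symm⟩

theorem equitablyColorableOn_one {U : Finset V} (hU : G.IsIndepSet U) :
    G.EquitablyColorableOn U 1 #U :=
  ⟨fun _ => 0, fun x hx y hy hxy => (hU hx hy (G.ne_of_adj hxy) hxy).elim,
    fun c => by simp [Subsingleton.elim c 0]⟩

theorem EquitablyColorableOn.of_sdiff [DecidableEq V] {S U : Finset V} {b : ℕ} (hSU : S ⊆ U)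
    (hS : G.IsIndepSet S) (h : G.EquitablyColorableOn (U \ S) b #S) :
    G.EquitablyColorableOn U (b + 1) #S := by
  obtain ⟨φ, hproper, hclass⟩ := h
  refine ⟨fun x => if x ∈ S then Fin.last b else (φ x).castSucc, ?_, fun c => ?_⟩
  · intro x hx y hy hxy
    by_cases hxS : x ∈ S <;> by_cases hyS : y ∈ S <;> simp only [hxS, hyS, if_true, if_false]
    · exact (hS hxS hyS (G.ne_of_adj hxy) hxy).elim
    · exact (Fin.castSucc_lt_last _).ne'
    · exact (Fin.castSucc_lt_last _).ne
    · exact fun h => hproper x (mem_sdiff.2 ⟨hx, hxS⟩) y (mem_sdiff.2 ⟨hy, hyS⟩) hxy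
        (Fin.castSucc_injective _ h)
  · induction c using Fin.lastCases with
    | last =>
      congr 1; ext x
      by_cases hxS : x ∈ S
      · simp [hxS, hSU hxS]
      · simp [hxS, (Fin.castSucc_lt_last _).ne]
    | cast d =>
      rw [← hclass d]; congr 1; ext x
      by_cases hxS : x ∈ S <;> simp [hxS, (Fin.castSucc_lt_last _).ne']

variable (G) [DecidableRel G.Adj]

def degreeIn (U : Finset V) (x : V) : ℕ := #{y ∈ U | G.Adj x y}

def ceilDegreeSum (m : ℕ) (U : Finset V) : ℕ := ∑ x ∈ U, (G.degreeIn U x - 1) ⌈/⌉ m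

variable {G}

theorem degreeIn_mono {U W : Finset V} (h : U ⊆ W) (x : V) : G.degreeIn U x ≤ G.degreeIn W x :=
  card_le_card (filter_subset_filter _ h)

theorem eq_of_adj_of_degreeIn_le_one {U : Finset V} {x y z : V} (hx : G.degreeIn U x ≤ 1)
    (hy : y ∈ U) (hxy : G.Adj x y) (hz : z ∈ U) (hxz : G.Adj x z) : z = y :=
  card_le_one.1 hx z (mem_filter.2 ⟨hz, hxz⟩) y (mem_filter.2 ⟨hy, hxy⟩)

theorem ceilDegreeSum_eq_zero_iff {m : ℕ} (hm : 0 < m) (U : Finset V) :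
    G.ceilDegreeSum m U = 0 ↔ ∀ x ∈ U, G.degreeIn U x ≤ 1 := by
  simp only [ceilDegreeSum, sum_eq_zero_iff, Nat.sub_one_ceilDiv_eq_zero_iff hm]

theorem ceilDegreeSum_sdiff_add_le (m : ℕ) {S U : Finset V} [DecidableEq V] (hSU : S ⊆ U) :
    G.ceilDegreeSum m (U \ S) + ∑ x ∈ S, (G.degreeIn U x - 1) ⌈/⌉ m ≤ G.ceilDegreeSum m U := by
  simp only [ceilDegreeSum]
  rw [← sum_sdiff hSU]
  gcongr with x
  simp only [Nat.ceilDiv_eq_add_pred_div]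
  have : G.degreeIn (U \ S) x ≤ G.degreeIn U x := degreeIn_mono sdiff_subset x
  exact Nat.div_le_div_right (by omega)

variable [DecidableEq V]

/-- Greedy: each chosen vertex rules out itself and at most `D` further vertices of `L`. -/
theorem exists_isIndepSet_subset_card_eq {D : ℕ} (t : ℕ) {L : Finset V}
    (hdeg : ∀ x ∈ L, G.degreeIn L x ≤ D) (hcard : (D + 1) * t ≤ #L + D) :
    ∃ T ⊆ L, G.IsIndepSet T ∧ #T = t := by
  induction t generalizing L with
  | zero => exact ⟨∅, empty_subset _, by simp, rfl⟩
  | succ t ih =>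
    obtain ⟨v, hv⟩ : L.Nonempty := card_pos.1 (by nlinarith)
    set L' := {y ∈ L.erase v | ¬G.Adj v y}
    have hL'L : L' ⊆ L := (filter_subset _ _).trans (erase_subset _ _)
    have hcard' : #(L.erase v) ≤ #L' + G.degreeIn L v := by
      rw [← card_filter_add_card_filter_not (fun y => ¬G.Adj v y)]
      gcongr
      simpa [degreeIn] using card_le_card (filter_subset_filter _ (erase_subset v L))
    obtain ⟨T, hTL', hT, hTcard⟩ := ih
      (fun x hx => (degreeIn_mono hL'L x).trans (hdeg x (hL'L hx)))
      (by have := hdeg v hv; rw [card_erase_of_mem hv] at hcard'; rw [mul_add_one] at hcard; omega)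
    have hvT : v ∉ T := fun h => by simpa [L'] using hTL' h
    refine ⟨insert v T, insert_subset hv (hTL'.trans hL'L), ?_, ?_⟩
    · rw [coe_insert]
      exact hT.insert fun y hy => (mem_filter.1 (hTL' hy)).2
    · rw [card_insert_of_notMem hvT, hTcard]

theorem exists_isIndepSet_isIndepSet_sdiff_of_degreeIn_le_one (t : ℕ) {U : Finset V}
    (hdeg : ∀ x ∈ U, G.degreeIn U x ≤ 1) (hU : #U = 2 * t) :
    ∃ S ⊆ U, G.IsIndepSet S ∧ G.IsIndepSet ↑(U \ S) ∧ #S = t := by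
  induction t generalizing U with
  | zero => exact ⟨∅, empty_subset _, by simp, by simp_all, rfl⟩
  | succ t ih =>
    by_cases hedge : ∃ u ∈ U, ∃ v ∈ U, G.Adj u v
    · obtain ⟨u, hu, v, hv, huv⟩ := hedge
      set U' := (U.erase u).erase v
      have hU'U : U' ⊆ U := (erase_subset _ _).trans (erase_subset _ _)
      obtain ⟨S', hS'U', hS', hS'd, hS'card⟩ := ih
        (fun x hx => (degreeIn_mono hU'U x).trans (hdeg x (hU'U hx)))
        (by rw [card_erase_of_mem (mem_erase.2 ⟨G.ne_of_adj huv.symm, hv⟩),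
              card_erase_of_mem hu]; omega)
      have huS' : u ∉ S' := fun h => by simpa [U'] using hS'U' h
      have hdiff : U \ insert u S' = insert v (U' \ S') := by
        ext x
        have : v ∉ S' := fun h => by simpa [U'] using hS'U' h
        simp only [U', mem_sdiff, mem_insert, mem_erase]
        grind [G.ne_of_adj huv]
      have hu_nadj : ∀ y ∈ U', ¬G.Adj u y := fun y hy h =>
        (mem_erase.1 hy).1 (eq_of_adj_of_degreeIn_le_one (hdeg u hu) hv huv (hU'U hy) h)
      have hv_nadj : ∀ y ∈ U', ¬G.Adj v y := fun y hy h =>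
        (mem_erase.1 (mem_erase.1 hy).2).1
          (eq_of_adj_of_degreeIn_le_one (hdeg v hv) hu huv.symm (hU'U hy) h)
      refine ⟨insert u S', insert_subset hu (hS'U'.trans hU'U), ?_, ?_, ?_⟩
      · rw [coe_insert]
        exact hS'.insert fun y hy => hu_nadj y (hS'U' hy)
      · rw [hdiff, coe_insert]
        exact hS'd.insert fun y hy => hv_nadj y (mem_sdiff.1 hy).1
      · rw [card_insert_of_notMem huS', hS'card]
    · push Not at hedge
      obtain ⟨S, hSU, hScard⟩ := exists_subset_card_eq (s := U) (n := t + 1) (by omega)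
      have hUind : G.IsIndepSet U := fun x hx y hy _ => hedge x hx y hy
      exact ⟨S, hSU, hUind.mono (coe_subset.2 hSU), hUind.mono (coe_subset.2 sdiff_subset),
        hScard⟩

theorem two_mul_sub_one_le_card_nonadj_degreeIn_le_one {m c : ℕ} (hm : 0 < m) {U : Finset V}
    (hU : #U = (c + 2) * m) (hσ : G.ceilDegreeSum m U ≤ c) {x₀ : V} (hx₀ : x₀ ∈ U)
    (hdeg : 2 ≤ G.degreeIn U x₀) :
    2 * (m - 1) ≤ #{y ∈ U | G.degreeIn U y ≤ 1 ∧ ¬G.Adj x₀ y} := by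
  set w := fun x => (G.degreeIn U x - 1) ⌈/⌉ m
  set B := {y ∈ U | y ≠ x₀ ∧ 2 ≤ G.degreeIn U y}
  have hB : w x₀ + #B ≤ c := by
    have hx₀B : x₀ ∉ B := by simp [B]
    calc w x₀ + #B ≤ w x₀ + ∑ x ∈ B, w x := by
          gcongr
          simpa using sum_le_sum fun x hx => Nat.one_le_sub_one_ceilDiv hm (mem_filter.1 hx).2.2
      _ = ∑ x ∈ insert x₀ B, w x := (sum_insert hx₀B).symm
      _ ≤ ∑ x ∈ U, w x := sum_le_sum_of_subset (insert_subset hx₀ (filter_subset _ _))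
      _ ≤ c := hσ
  have hcover : U ⊆ {y ∈ U | G.degreeIn U y ≤ 1 ∧ ¬G.Adj x₀ y} ∪ B ∪
      insert x₀ {y ∈ U | G.Adj x₀ y} := by
    intro y hy
    simp only [B, mem_union, mem_insert, mem_filter]
    by_cases h : y = x₀ <;> by_cases h' : G.Adj x₀ y <;> grind
  have hsize := (card_le_card hcover).trans
    ((card_union_le _ _).trans (add_le_add (card_union_le _ _) (card_insert_le _ _)))
  have hdeg₀ : G.degreeIn U x₀ - 1 ≤ m * w x₀ := (ceilDiv_le_iff_le_mul hm).1 le_rfl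
  have hdeg₀' : G.degreeIn U x₀ ≤ m * w x₀ + 1 := by omega
  rw [hU] at hsize
  change _ ≤ _ + _ + (G.degreeIn U x₀ + 1) at hsize
  obtain ⟨n, rfl⟩ : ∃ n, m = n + 1 := ⟨m - 1, by omega⟩
  rw [Nat.add_sub_cancel]
  nlinarith [Nat.mul_le_mul_right n hB]

theorem exists_isIndepSet_mem_card_eq {m c : ℕ} (hm : 0 < m) {U : Finset V}
    (hU : #U = (c + 2) * m) (hσ : G.ceilDegreeSum m U ≤ c) {x₀ : V} (hx₀ : x₀ ∈ U)
    (hdeg : 2 ≤ G.degreeIn U x₀) : ∃ S ⊆ U, x₀ ∈ S ∧ G.IsIndepSet S ∧ #S = m := by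
  set L := {y ∈ U | G.degreeIn U y ≤ 1 ∧ ¬G.Adj x₀ y}
  have hL : 2 * (m - 1) ≤ #L := two_mul_sub_one_le_card_nonadj_degreeIn_le_one hm hU hσ hx₀ hdeg
  have hLU : L ⊆ U := filter_subset _ _
  obtain ⟨T, hTL, hT, hTcard⟩ := exists_isIndepSet_subset_card_eq (D := 1) (m - 1)
    (fun x hx => (degreeIn_mono hLU x).trans (mem_filter.1 hx).2.1) (by omega)
  have hx₀T : x₀ ∉ T := fun h => by have := (mem_filter.1 (hTL h)).2.1; omega
  refine ⟨insert x₀ T, insert_subset hx₀ (hTL.trans hLU), mem_insert_self _ _, ?_, ?_⟩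
  · rw [coe_insert]
    exact hT.insert fun y hy => (mem_filter.1 (hTL hy)).2.2
  · rw [card_insert_of_notMem hx₀T, hTcard]
    omega

theorem exists_isIndepSet_card_eq_ceilDegreeSum_sdiff_le {m b : ℕ} (hm : 0 < m) {U : Finset V}
    (hU : #U = (b + 3) * m) (hσ : G.ceilDegreeSum m U ≤ b + 1) :
    ∃ S ⊆ U, G.IsIndepSet S ∧ #S = m ∧ G.ceilDegreeSum m (U \ S) ≤ b := by
  by_cases hhigh : ∃ x ∈ U, 2 ≤ G.degreeIn U x
  · obtain ⟨x₀, hx₀, hdeg⟩ := hhigh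
    obtain ⟨S, hSU, hx₀S, hS, hScard⟩ := exists_isIndepSet_mem_card_eq hm hU hσ hx₀ hdeg
    have hw₀ : 1 ≤ ∑ x ∈ S, (G.degreeIn U x - 1) ⌈/⌉ m :=
      (Nat.one_le_sub_one_ceilDiv hm hdeg).trans <|
        single_le_sum (f := fun x => (G.degreeIn U x - 1) ⌈/⌉ m) (fun _ _ => Nat.zero_le _) hx₀S
    exact ⟨S, hSU, hS, hScard, by have := ceilDegreeSum_sdiff_add_le (G := G) m hSU; omega⟩
  · push Not at hhigh
    obtain ⟨S, hSU, hS, hScard⟩ := exists_isIndepSet_subset_card_eq (D := 1) m (L := U)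
      (fun x hx => Nat.le_of_lt_succ (hhigh x hx)) (by rw [hU]; nlinarith)
    have hσ₀ := (ceilDegreeSum_eq_zero_iff hm U).2 fun x hx => Nat.le_of_lt_succ (hhigh x hx)
    exact ⟨S, hSU, hS, hScard, by have := ceilDegreeSum_sdiff_add_le (G := G) m hSU; omega⟩

theorem equitablyColorableOn_of_ceilDegreeSum_le {m : ℕ} (hm : 0 < m) (b : ℕ) {U : Finset V}
    (hU : #U = (b + 2) * m) (hσ : G.ceilDegreeSum m U ≤ b) :
    G.EquitablyColorableOn U (b + 2) m := by
  induction b generalizing U with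
  | zero =>
    obtain ⟨S, hSU, hS, hSd, hScard⟩ := exists_isIndepSet_isIndepSet_sdiff_of_degreeIn_le_one m
      ((ceilDegreeSum_eq_zero_iff hm U).1 (Nat.le_zero.1 hσ)) (by omega)
    have hdcard : #(U \ S) = #S := by rw [card_sdiff_of_subset hSU, hU, hScard]; omega
    subst hScard
    exact (hdcard ▸ equitablyColorableOn_one hSd).of_sdiff hSU hS
  | succ b ih =>
    obtain ⟨S, hSU, hS, hScard, hσ'⟩ := exists_isIndepSet_card_eq_ceilDegreeSum_sdiff_le hm hU hσ
    have hdcard : #(U \ S) = (b + 2) * m := by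
      rw [card_sdiff_of_subset hSU, hU, hScard]
      exact Nat.sub_eq_of_eq_add (by ring)
    subst hScard
    exact (ih hdcard hσ').of_sdiff hSU hS

end SimpleGraph

theorem equitable_colouring_from_degree_sum_minus_one_general (k a : ℕ) (hk : 3 ≤ k)
    (V : Type) [Fintype V] [DecidableEq V] (hV : Fintype.card V = a * (k - 1))
    (H : SimpleGraph V) [DecidableRel H.Adj]
    (hsum : ((∑ x : V, ((H.degree x - 1) + (k - 2)) / (k - 1) : ℕ) : ℤ) ≤ (a : ℤ) - 2) :
    ∃ φ : V → Fin a,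
      (∀ x y : V, H.Adj x y → φ x ≠ φ y) ∧
      ∀ c : Fin a, (Finset.univ.filter (fun x => φ x = c)).card = k - 1 := by
  have hσ : H.ceilDegreeSum (k - 1) univ = ∑ x : V, ((H.degree x - 1) + (k - 2)) / (k - 1) := by
    refine sum_congr rfl fun x _ => ?_
    rw [Nat.ceilDiv_eq_add_pred_div, SimpleGraph.degreeIn, ← SimpleGraph.neighborFinset_eq_filter,
      SimpleGraph.card_neighborFinset_eq_degree]
    congr 1
    omega
  obtain ⟨b, rfl⟩ : ∃ b, a = b + 2 := ⟨a - 2, by omega⟩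
  obtain ⟨φ, hproper, hclass⟩ :=
    H.equitablyColorableOn_of_ceilDegreeSum_le (by omega) b (U := univ) hV (by omega)
  exact ⟨φ, fun x y => hproper x (mem_univ x) y (mem_univ y), by simpa using hclass⟩

/-- Lemma 4.3(i): if `k ≥ 3`, `a ≥ 1` and `H` is a graph of order `a(k-1)` with
`∑_x ⌈(deg_H(x) - 1)/(k-1)⌉ ≤ a - 2`, then `H` has a proper colouring with `a` colours
in which every colour class has exactly `k - 1` vertices. (Here
`⌈(d-1)/(k-1)⌉ = ((d - 1) + (k - 2))/(k - 1)` in natural numbers, which equals the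
real ceiling for every `d ≥ 0`, and the bound `a - 2` is taken in `ℤ`.) -/
theorem equitable_colouring_from_degree_sum_minus_one (k a : ℕ) (hk : 3 ≤ k) (ha : 1 ≤ a)
    (V : Type) [Fintype V] [DecidableEq V] (hV : Fintype.card V = a * (k - 1))
    (H : SimpleGraph V) [DecidableRel H.Adj]
    (hsum : ((∑ x : V, ((H.degree x - 1) + (k - 2)) / (k - 1) : ℕ) : ℤ) ≤ (a : ℤ) - 2) :
    ∃ φ : V → Fin a,
      (∀ x y : V, H.Adj x y → φ x ≠ φ y) ∧
      ∀ c : Fin a, (Finset.univ.filter (fun x => φ x = c)).card = k - 1 :=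
  equitable_colouring_from_degree_sum_minus_one_general k a hk V hV H hsum
end

section
/- Let a ≥ 1 be an integer and let H be a graph of order 2a such that the maximum degree of H is at most 2a − 2 and the sum over all vertices x of H of ⌈(deg_H(x) − 1)/2⌉ is at most a. Then H has a proper colouring with a colours such that each colour class has exactly 2 vertices. -/
open Finset

namespace EqThree

variable {V : Type} [Fintype V] [DecidableEq V] (H : SimpleGraph V) [DecidableRel H.Adj]

/-- degree of `x` within the finset `s` -/
def ds (s : Finset V) (x : V) : ℕ := (s ∩ H.neighborFinset x).card

lemma mem_inter_nbr {s : Finset V} {x w : V} :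
    w ∈ s ∩ H.neighborFinset x ↔ w ∈ s ∧ H.Adj x w := by
  simp [Finset.mem_inter]

lemma ds_le_of_subset {s t : Finset V} (h : s ⊆ t) (x : V) : ds H s x ≤ ds H t x :=
  Finset.card_le_card (Finset.inter_subset_inter h (Finset.Subset.refl _))

lemma ds_erase_adj {s : Finset V} {x v : V} (hx : x ∈ s) (h : H.Adj v x) :
    ds H (s.erase x) v = ds H s v - 1 := by
  unfold ds
  rw [Finset.erase_inter, Finset.card_erase_of_mem]
  exact (mem_inter_nbr H).mpr ⟨hx, h⟩

lemma ds_erase_nonadj {s : Finset V} {x v : V} (h : ¬ H.Adj v x) :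
    ds H (s.erase x) v = ds H s v := by
  unfold ds
  rw [Finset.erase_inter, Finset.erase_eq_of_notMem]
  intro hmem
  exact h ((mem_inter_nbr H).mp hmem).2


/-- extend an involution by a swap of `x` and `y` -/
def swapExtend (x y : V) (f : V → V) : V → V :=
  fun z => if z = x then y else if z = y then x else f z

lemma swapExtend_left (x y : V) (f : V → V) : swapExtend x y f x = y := by
  unfold swapExtend; simp

lemma swapExtend_right {x y : V} (h : x ≠ y) (f : V → V) : swapExtend x y f y = x := by
  unfold swapExtend; simp [Ne.symm h]

lemma swapExtend_other {x y z : V} (h1 : z ≠ x) (h2 : z ≠ y) (f : V → V) :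
    swapExtend x y f z = f z := by
  unfold swapExtend; simp [h1, h2]

lemma two_le_ds {s : Finset V} {v a b : V} (ha : a ∈ s) (hb : b ∈ s) (hab : a ≠ b)
    (h1 : H.Adj v a) (h2 : H.Adj v b) : 2 ≤ ds H s v := by
  have hsub : ({a, b} : Finset V) ⊆ s ∩ H.neighborFinset v := by
    intro w hw
    rcases Finset.mem_insert.mp hw with rfl | hw
    · exact (mem_inter_nbr H).mpr ⟨ha, h1⟩
    · rcases Finset.mem_singleton.mp hw with rfl
      exact (mem_inter_nbr H).mpr ⟨hb, h2⟩
  calc 2 = ({a, b} : Finset V).card := (Finset.card_pair hab).symm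
  _ ≤ _ := Finset.card_le_card hsub

lemma three_le_ds {s : Finset V} {v a b c : V} (ha : a ∈ s) (hb : b ∈ s) (hc : c ∈ s)
    (hab : a ≠ b) (hac : a ≠ c) (hbc : b ≠ c)
    (h1 : H.Adj v a) (h2 : H.Adj v b) (h3 : H.Adj v c) : 3 ≤ ds H s v := by
  have hsub : ({a, b, c} : Finset V) ⊆ s ∩ H.neighborFinset v := by
    intro w hw
    rcases Finset.mem_insert.mp hw with rfl | hw
    · exact (mem_inter_nbr H).mpr ⟨ha, h1⟩
    rcases Finset.mem_insert.mp hw with rfl | hw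
    · exact (mem_inter_nbr H).mpr ⟨hb, h2⟩
    rcases Finset.mem_singleton.mp hw with rfl
    exact (mem_inter_nbr H).mpr ⟨hc, h3⟩
  have hcard : ({a, b, c} : Finset V).card = 3 :=
    Finset.card_eq_three.mpr ⟨a, b, c, hab, hac, hbc, rfl⟩
  calc 3 = ({a, b, c} : Finset V).card := hcard.symm
  _ ≤ _ := Finset.card_le_card hsub

lemma pair_sum_le {s : Finset V} {x v : V} (hx : x ∈ s) (hv : v ∈ s) (hxv : x ≠ v)
    {c : ℕ} (hsum : ∑ w ∈ s, ds H s w / 2 ≤ c) :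
    ds H s x / 2 + ds H s v / 2 ≤ c := by
  have hsub : ({x, v} : Finset V) ⊆ s := by
    intro w hw
    rcases Finset.mem_insert.mp hw with rfl | hw
    · exact hx
    · rcases Finset.mem_singleton.mp hw with rfl; exact hv
  calc ds H s x / 2 + ds H s v / 2 = ∑ w ∈ ({x, v} : Finset V), ds H s w / 2 := by
        rw [Finset.sum_pair hxv]
  _ ≤ ∑ w ∈ s, ds H s w / 2 := Finset.sum_le_sum_of_subset hsub
  _ ≤ c := hsum

lemma triple_sum_le {s : Finset V} {x v₁ v₂ : V} (hx : x ∈ s) (h1 : v₁ ∈ s) (h2 : v₂ ∈ s)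
    (hx1 : x ≠ v₁) (hx2 : x ≠ v₂) (h12 : v₁ ≠ v₂)
    {c : ℕ} (hsum : ∑ w ∈ s, ds H s w / 2 ≤ c) :
    ds H s x / 2 + ds H s v₁ / 2 + ds H s v₂ / 2 ≤ c := by
  have hsub : ({x, v₁, v₂} : Finset V) ⊆ s := by
    intro w hw
    rcases Finset.mem_insert.mp hw with rfl | hw
    · exact hx
    rcases Finset.mem_insert.mp hw with rfl | hw
    · exact h1
    rcases Finset.mem_singleton.mp hw with rfl
    exact h2
  have he : ∑ w ∈ ({x, v₁, v₂} : Finset V), ds H s w / 2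
      = ds H s x / 2 + (ds H s v₁ / 2 + ds H s v₂ / 2) := by
    rw [Finset.sum_insert (by
      intro hmem
      rcases Finset.mem_insert.mp hmem with h | h
      · exact hx1 h
      · exact hx2 (Finset.mem_singleton.mp h)), Finset.sum_pair h12]
  have := le_trans (le_of_eq he.symm) (le_trans (Finset.sum_le_sum_of_subset hsub) hsum)
  omega


/-- A non-neighbour of a maximum-degree vertex has degree at most `2c-3`. -/
lemma F1 {c : ℕ} (hc : 2 ≤ c) {s : Finset V} (hcard : s.card = 2 * c)
    (hsum : ∑ v ∈ s, ds H s v / 2 ≤ c)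
    {x : V} (hx : x ∈ s) (hmaxx : ∀ v ∈ s, ds H s v ≤ ds H s x)
    (hDx : ds H s x ≤ 2 * c - 2)
    {v : V} (hv : v ∈ s) (hvx : v ≠ x) (hnadj : ¬ H.Adj x v) :
    ds H s v ≤ 2 * c - 3 := by
  by_contra hcon
  push_neg at hcon
  have hdv : ds H s v = 2 * c - 2 := by
    have := le_trans (hmaxx v hv) hDx
    omega
  have hDx2 : ds H s x = 2 * c - 2 := by
    have := hmaxx v hv
    omega
  have hps := pair_sum_le H hx hv (Ne.symm hvx) hsum
  rw [hdv, hDx2] at hps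
  have hc2 : c = 2 := by omega
  subst hc2
  -- now `s.card = 4` and both `x, v` have degree `2` and are non-adjacent
  have hNx : s ∩ H.neighborFinset x = (s.erase x).erase v := by
    apply Finset.eq_of_subset_of_card_le
    · intro w hw
      obtain ⟨hws, hadj⟩ := (mem_inter_nbr H).mp hw
      refine Finset.mem_erase.mpr ⟨?_, Finset.mem_erase.mpr ⟨?_, hws⟩⟩
      · rintro rfl; exact hnadj hadj
      · rintro rfl; exact H.irrefl hadj
    · have h1 : ((s.erase x).erase v).card = 2 := by
        rw [Finset.card_erase_of_mem (Finset.mem_erase.mpr ⟨hvx, hv⟩),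
          Finset.card_erase_of_mem hx, hcard]
      have h2 : (s ∩ H.neighborFinset x).card = 2 := hDx2
      omega
  have hNv : s ∩ H.neighborFinset v = (s.erase v).erase x := by
    apply Finset.eq_of_subset_of_card_le
    · intro w hw
      obtain ⟨hws, hadj⟩ := (mem_inter_nbr H).mp hw
      refine Finset.mem_erase.mpr ⟨?_, Finset.mem_erase.mpr ⟨?_, hws⟩⟩
      · rintro rfl; exact hnadj hadj.symm
      · rintro rfl; exact H.irrefl hadj
    · have h1 : ((s.erase v).erase x).card = 2 := by
        rw [Finset.card_erase_of_mem (Finset.mem_erase.mpr ⟨Ne.symm hvx, hx⟩),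
          Finset.card_erase_of_mem hv, hcard]
      have h2 : (s ∩ H.neighborFinset v).card = 2 := hdv
      omega
  have hall : ∀ u ∈ s, 1 ≤ ds H s u / 2 := by
    intro u hu
    suffices h : 2 ≤ ds H s u by omega
    by_cases hux : u = x
    · subst hux; omega
    by_cases huv : u = v
    · subst huv; omega
    have hu1 : u ∈ (s.erase x).erase v := Finset.mem_erase.mpr ⟨huv, Finset.mem_erase.mpr ⟨hux, hu⟩⟩
    have hu2 : u ∈ (s.erase v).erase x := Finset.mem_erase.mpr ⟨hux, Finset.mem_erase.mpr ⟨huv, hu⟩⟩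
    have hadjx : H.Adj x u := ((mem_inter_nbr H).mp (hNx ▸ hu1)).2
    have hadjv : H.Adj v u := ((mem_inter_nbr H).mp (hNv ▸ hu2)).2
    exact two_le_ds H hx hv (fun h => hvx h.symm) hadjx.symm hadjv.symm
  have hbig := Finset.card_nsmul_le_sum s (fun u => ds H s u / 2) 1 hall
  rw [hcard] at hbig
  simp only [smul_eq_mul, mul_one] at hbig
  omega

/-- impossibility of two `B`-vertices when `c = 3` -/
lemma c3_impossible {s : Finset V} (hcard : s.card = 6)
    (hsum : ∑ v ∈ s, ds H s v / 2 ≤ 3)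
    {x v₁ v₂ : V} (hx : x ∈ s) (h1 : v₁ ∈ s) (h2 : v₂ ∈ s)
    (hx1 : v₁ ≠ x) (hx2 : v₂ ≠ x) (h12 : v₁ ≠ v₂)
    (hmaxx : ∀ v ∈ s, ds H s v ≤ ds H s x)
    (hd1 : ds H s v₁ = 3) (hd2 : ds H s v₂ = 3)
    (hn1 : ¬ H.Adj x v₁) (hn2 : ¬ H.Adj x v₂) : False := by
  have htr := triple_sum_le H hx h1 h2 (Ne.symm hx1) (Ne.symm hx2) h12 hsum
  have hdx : ds H s x = 3 := by
    have hge := hmaxx v₁ h1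
    rw [hd1, hd2] at htr
    omega
  set u : Finset V := ((s.erase x).erase v₁).erase v₂ with hu
  have hmem2 : v₂ ∈ (s.erase x).erase v₁ :=
    Finset.mem_erase.mpr ⟨h12.symm, Finset.mem_erase.mpr ⟨hx2, h2⟩⟩
  have hucard : u.card = 3 := by
    rw [hu, Finset.card_erase_of_mem hmem2,
      Finset.card_erase_of_mem (Finset.mem_erase.mpr ⟨hx1, h1⟩),
      Finset.card_erase_of_mem hx, hcard]
  have humem : ∀ w ∈ u, w ∈ s ∧ w ≠ x ∧ w ≠ v₁ ∧ w ≠ v₂ := by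
    intro w hw
    rw [hu, Finset.mem_erase, Finset.mem_erase, Finset.mem_erase] at hw
    exact ⟨hw.2.2.2, hw.2.2.1, hw.2.1, hw.1⟩
  have hudeg : ∀ w ∈ u, ds H s w ≤ 1 := by
    intro w hw
    obtain ⟨hws, hwx, hwv1, hwv2⟩ := humem w hw
    have hsub : ({x, v₁, v₂, w} : Finset V) ⊆ s := by
      intro z hz
      rcases Finset.mem_insert.mp hz with rfl | hz
      · exact hx
      rcases Finset.mem_insert.mp hz with rfl | hz
      · exact h1
      rcases Finset.mem_insert.mp hz with rfl | hz
      · exact h2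
      rcases Finset.mem_singleton.mp hz with rfl
      exact hws
    have he : ∑ z ∈ ({x, v₁, v₂, w} : Finset V), ds H s z / 2
        = ds H s x / 2 + (ds H s v₁ / 2 + (ds H s v₂ / 2 + ds H s w / 2)) := by
      rw [Finset.sum_insert (by
          intro hmem
          rcases Finset.mem_insert.mp hmem with h | hmem
          · exact hx1 h.symm
          rcases Finset.mem_insert.mp hmem with h | hmem
          · exact hx2 h.symm
          · exact hwx (Finset.mem_singleton.mp hmem).symm),
        Finset.sum_insert (by
          intro hmem
          rcases Finset.mem_insert.mp hmem with h | hmem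
          · exact h12 h
          · exact hwv1 (Finset.mem_singleton.mp hmem).symm),
        Finset.sum_pair (Ne.symm hwv2)]
    have hle := le_trans (le_of_eq he.symm) (le_trans (Finset.sum_le_sum_of_subset hsub) hsum)
    rw [hdx, hd1, hd2] at hle
    omega
  have hNx : s ∩ H.neighborFinset x = u := by
    apply Finset.eq_of_subset_of_card_le
    · intro w hw
      obtain ⟨hws, hadj⟩ := (mem_inter_nbr H).mp hw
      rw [hu]
      refine Finset.mem_erase.mpr ⟨?_, Finset.mem_erase.mpr ⟨?_, Finset.mem_erase.mpr ⟨?_, hws⟩⟩⟩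
      · rintro rfl; exact hn2 hadj
      · rintro rfl; exact hn1 hadj
      · rintro rfl; exact H.irrefl hadj
    · have h2' : (s ∩ H.neighborFinset x).card = 3 := hdx
      omega
  have hfin : ds H s v₁ ≤ 1 := by
    have hsubv : s ∩ H.neighborFinset v₁ ⊆ {v₂} := by
      intro w hw
      obtain ⟨hws, hadj⟩ := (mem_inter_nbr H).mp hw
      rw [Finset.mem_singleton]
      by_contra hwv2
      have hwx : w ≠ x := by rintro rfl; exact hn1 hadj.symm
      have hwv1 : w ≠ v₁ := by rintro rfl; exact H.irrefl hadj
      have hwu : w ∈ u := by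
        rw [hu]
        exact Finset.mem_erase.mpr ⟨hwv2, Finset.mem_erase.mpr ⟨hwv1, Finset.mem_erase.mpr ⟨hwx, hws⟩⟩⟩
      have hadjx : H.Adj x w := ((mem_inter_nbr H).mp (hNx ▸ hwu)).2
      have h2le : 2 ≤ ds H s w := two_le_ds H hx h1 (Ne.symm hx1) hadjx.symm hadj.symm
      have := hudeg w hwu
      omega
    calc ds H s v₁ ≤ ({v₂} : Finset V).card := Finset.card_le_card hsubv
    _ = 1 := Finset.card_singleton _
  omega


/-- selection of a removable non-adjacent pair, case `c = 2` -/
lemma select2 {s : Finset V} (hcard : s.card = 4)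
    (hmax : ∀ v ∈ s, ds H s v ≤ 2)
    (hsum : ∑ v ∈ s, ds H s v / 2 ≤ 2) :
    ∃ x ∈ s, ∃ y ∈ s, x ≠ y ∧ ¬ H.Adj x y ∧
      (∀ v ∈ (s.erase x).erase y, ds H ((s.erase x).erase y) v ≤ 2 * (2 - 1) - 2) ∧
      (∑ v ∈ (s.erase x).erase y, ds H ((s.erase x).erase y) v / 2 ≤ 2 - 1) := by
  -- enumerate `s = {x, p, q, r}`
  have hne : s.Nonempty := Finset.card_pos.mp (by omega)
  obtain ⟨x, hx⟩ := hne
  have hc3 : (s.erase x).card = 3 := by rw [Finset.card_erase_of_mem hx, hcard]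
  obtain ⟨p, q, r, hpq, hpr, hqr, hs3⟩ := Finset.card_eq_three.mp hc3
  have hmem : ∀ z, z ∈ s.erase x → z = p ∨ z = q ∨ z = r := by
    intro z hz
    rw [hs3] at hz
    rcases Finset.mem_insert.mp hz with h | hz
    · exact Or.inl h
    rcases Finset.mem_insert.mp hz with h | hz
    · exact Or.inr (Or.inl h)
    · exact Or.inr (Or.inr (Finset.mem_singleton.mp hz))
  have hpe : p ∈ s.erase x := by rw [hs3]; simp
  have hqe : q ∈ s.erase x := by rw [hs3]; simp
  have hre : r ∈ s.erase x := by rw [hs3]; simp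
  have hps : p ∈ s := Finset.mem_of_mem_erase hpe
  have hqs : q ∈ s := Finset.mem_of_mem_erase hqe
  have hrs : r ∈ s := Finset.mem_of_mem_erase hre
  have hxp : x ≠ p := fun h => (Finset.mem_erase.mp hpe).1 h.symm
  have hxq : x ≠ q := fun h => (Finset.mem_erase.mp hqe).1 h.symm
  have hxr : x ≠ r := fun h => (Finset.mem_erase.mp hre).1 h.symm
  -- helper: star contradiction
  have hstar : ∀ a b c d : V, a ∈ s → b ∈ s → c ∈ s → d ∈ s → b ≠ c → b ≠ d → c ≠ d →
      H.Adj a b → H.Adj a c → H.Adj a d → False := by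
    intro a b c d has hbs hcs hds hbc hbd hcd h1 h2 h3
    have := three_le_ds H hbs hcs hds hbc hbd hcd h1 h2 h3
    have := hmax a has
    omega
  -- helper: triangle contradiction
  have htri : ∀ a b c : V, a ∈ s → b ∈ s → c ∈ s → a ≠ b → a ≠ c → b ≠ c →
      H.Adj a b → H.Adj b c → H.Adj a c → False := by
    intro a b c has hbs hcs hab hac hbc h1 h2 h3
    have ha2 : 2 ≤ ds H s a := two_le_ds H hbs hcs hbc h1 h3
    have hb2 : 2 ≤ ds H s b := two_le_ds H has hcs hac h1.symm h2
    have hc2 : 2 ≤ ds H s c := two_le_ds H has hbs hab h3.symm h2.symm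
    have := triple_sum_le H has hbs hcs hab hac hbc hsum
    omega
  -- helper: build the conclusion from two disjoint non-adjacent pairs
  have hmk : ∀ u w : V, u ∈ s → w ∈ s → u ≠ w → ¬ H.Adj u w →
      (∀ z₁ z₂ : V, z₁ ∈ (s.erase u).erase w → z₂ ∈ (s.erase u).erase w → z₁ ≠ z₂ →
        ¬ H.Adj z₁ z₂) →
      (∃ x ∈ s, ∃ y ∈ s, x ≠ y ∧ ¬ H.Adj x y ∧
        (∀ v ∈ (s.erase x).erase y, ds H ((s.erase x).erase y) v ≤ 2 * (2 - 1) - 2) ∧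
        (∑ v ∈ (s.erase x).erase y, ds H ((s.erase x).erase y) v / 2 ≤ 2 - 1)) := by
    intro u w hu hw huw hnadj hrest
    have hzero : ∀ v ∈ (s.erase u).erase w, ds H ((s.erase u).erase w) v = 0 := by
      intro v hv
      have : (s.erase u).erase w ∩ H.neighborFinset v = ∅ := by
        rw [Finset.eq_empty_iff_forall_notMem]
        intro z hz
        obtain ⟨hz1, hz2⟩ := (mem_inter_nbr H).mp hz
        exact hrest v z hv hz1 (H.ne_of_adj hz2) hz2
      unfold ds
      rw [this, Finset.card_empty]
    refine ⟨u, hu, w, hw, huw, hnadj, ?_, ?_⟩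
    · intro v hv; rw [hzero v hv]
    · rw [Finset.sum_eq_zero (fun v hv => by simp [hzero v hv])]
      omega
  -- membership helpers for the three candidate partners of x
  have hrest_gen : ∀ y z, y ∈ s.erase x → z ∈ (s.erase x).erase y →
      z ∈ s.erase x ∧ z ≠ y := by
    intro y z _ hz
    exact ⟨Finset.mem_of_mem_erase hz, (Finset.mem_erase.mp hz).1⟩
  -- nonadjacency transfer helper
  have hpairfree : ∀ y a b : V, y ∈ s.erase x →
      (∀ z, z ∈ s.erase x → z ≠ y → z = a ∨ z = b) → ¬ H.Adj a b →
      ∀ z₁ z₂ : V, z₁ ∈ (s.erase x).erase y → z₂ ∈ (s.erase x).erase y → z₁ ≠ z₂ →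
        ¬ H.Adj z₁ z₂ := by
    intro y a b hy hmem2 hnab z₁ z₂ hz₁ hz₂ hne12
    obtain ⟨hz₁e, hz₁y⟩ := hrest_gen y z₁ hy hz₁
    obtain ⟨hz₂e, hz₂y⟩ := hrest_gen y z₂ hy hz₂
    rcases hmem2 z₁ hz₁e hz₁y with rfl | rfl <;> rcases hmem2 z₂ hz₂e hz₂y with rfl | rfl
    · exact absurd rfl hne12
    · exact hnab
    · exact fun h => hnab h.symm
    · exact absurd rfl hne12
  -- the three candidate splits
  have hmemp : ∀ z, z ∈ s.erase x → z ≠ p → z = q ∨ z = r := by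
    intro z hz hzp
    rcases hmem z hz with h | h | h
    · exact absurd h hzp
    · exact Or.inl h
    · exact Or.inr h
  have hmemq : ∀ z, z ∈ s.erase x → z ≠ q → z = p ∨ z = r := by
    intro z hz hzq
    rcases hmem z hz with h | h | h
    · exact Or.inl h
    · exact absurd h hzq
    · exact Or.inr h
  have hmemr : ∀ z, z ∈ s.erase x → z ≠ r → z = p ∨ z = q := by
    intro z hz hzr
    rcases hmem z hz with h | h | h
    · exact Or.inl h
    · exact Or.inr h
    · exact absurd h hzr
  -- case analysis
  by_cases hAqr : H.Adj q r
  · by_cases hApr : H.Adj p r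
    · by_cases hApq : H.Adj p q
      · exact (htri p q r hps hqs hrs hpq hpr hqr hApq hAqr hApr).elim
      · by_cases hAxr : H.Adj x r
        · exact (hstar r x p q hrs hx hps hqs hxp hxq hpq hAxr.symm hApr.symm hAqr.symm).elim
        · exact hmk x r hx hrs hxr hAxr (hpairfree r p q hre hmemr hApq)
    · by_cases hAxq : H.Adj x q
      · by_cases hAxr : H.Adj x r
        · exact (htri x q r hx hqs hrs hxq hxr hqr hAxq hAqr hAxr).elim
        · by_cases hApq : H.Adj p q
          · exact (hstar q x p r hqs hx hps hrs hxp hxr hpr hAxq.symm hApq.symm hAqr).elim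
          · exact hmk x r hx hrs hxr hAxr (hpairfree r p q hre hmemr hApq)
      · exact hmk x q hx hqs hxq hAxq (hpairfree q p r hqe hmemq hApr)
  · by_cases hAxp : H.Adj x p
    · by_cases hAxq : H.Adj x q
      · by_cases hAxr : H.Adj x r
        · exact (hstar x p q r hx hps hqs hrs hpq hpr hqr hAxp hAxq hAxr).elim
        · by_cases hApq : H.Adj p q
          · exact (htri x p q hx hps hqs hxp hxq hpq hAxp hApq hAxq).elim
          · exact hmk x r hx hrs hxr hAxr (hpairfree r p q hre hmemr hApq)
      · by_cases hApr : H.Adj p r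
        · by_cases hAxr : H.Adj x r
          · exact (htri x p r hx hps hrs hxp hxr hpr hAxp hApr hAxr).elim
          · by_cases hApq : H.Adj p q
            · exact (hstar p x q r hps hx hqs hrs hxq hxr hqr hAxp.symm hApq hApr).elim
            · exact hmk x r hx hrs hxr hAxr (hpairfree r p q hre hmemr hApq)
        · exact hmk x q hx hqs hxq hAxq (hpairfree q p r hqe hmemq hApr)
    · exact hmk x p hx hps hxp hAxp (hpairfree p q r hpe hmemp hAqr)


/-- selection of a removable non-adjacent pair -/
lemma select (c : ℕ) (hc : 2 ≤ c) (s : Finset V) (hcard : s.card = 2 * c)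
    (hmax : ∀ v ∈ s, ds H s v ≤ 2 * c - 2)
    (hsum : ∑ v ∈ s, ds H s v / 2 ≤ c) :
    ∃ x ∈ s, ∃ y ∈ s, x ≠ y ∧ ¬ H.Adj x y ∧
      (∀ v ∈ (s.erase x).erase y, ds H ((s.erase x).erase y) v ≤ 2 * (c - 1) - 2) ∧
      (∑ v ∈ (s.erase x).erase y, ds H ((s.erase x).erase y) v / 2 ≤ c - 1) := by
  rcases eq_or_lt_of_le hc with hc2 | hc3
  · subst hc2
    exact select2 H (by omega) (fun v hv => by have := hmax v hv; omega) hsum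
  -- now 3 ≤ c
  replace hc3 : 3 ≤ c := hc3
  have hsne : s.Nonempty := Finset.card_pos.mp (by omega)
  obtain ⟨x, hx, hmaxx⟩ := Finset.exists_max_image s (ds H s) hsne
  set t := (s.erase x).filter (fun v => ¬ H.Adj x v) with ht
  have htfull : (s.erase x).filter (fun v => H.Adj x v) = s ∩ H.neighborFinset x := by
    ext w
    simp only [Finset.mem_filter, Finset.mem_erase, Finset.mem_inter,
      SimpleGraph.mem_neighborFinset]
    constructor
    · rintro ⟨⟨_, hws⟩, ha⟩; exact ⟨hws, ha⟩
    · rintro ⟨hws, ha⟩; exact ⟨⟨fun hwx => H.irrefl (hwx ▸ ha), hws⟩, ha⟩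
  have htcard : ds H s x + t.card = 2 * c - 1 := by
    have hsplit := Finset.card_filter_add_card_filter_not
      (s := s.erase x) (fun v => H.Adj x v)
    rw [htfull] at hsplit
    have hce : (s.erase x).card = 2 * c - 1 := by rw [Finset.card_erase_of_mem hx, hcard]
    have hd : (s ∩ H.neighborFinset x).card = ds H s x := rfl
    rw [ht]
    omega
  have htne : t.Nonempty := by
    have := hmax x hx
    exact Finset.card_pos.mp (by omega)
  have htmem : ∀ y ∈ t, y ∈ s ∧ y ≠ x ∧ ¬ H.Adj x y := by
    intro y hy
    rw [ht, Finset.mem_filter, Finset.mem_erase] at hy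
    exact ⟨hy.1.2, hy.1.1, hy.2⟩
  set B := (s.erase x).filter
    (fun v => if H.Adj x v then 2 * c - 2 ≤ ds H s v else 2 * c - 3 ≤ ds H s v) with hB
  have hBprop : ∀ v ∈ B, v ∈ s ∧ v ≠ x ∧ ¬ H.Adj x v ∧ ds H s v = 2 * c - 3 := by
    intro v hv
    rw [hB, Finset.mem_filter, Finset.mem_erase] at hv
    obtain ⟨⟨hvx, hvs⟩, hcond⟩ := hv
    by_cases had : H.Adj x v
    · rw [if_pos had] at hcond
      exfalso
      have hdv : ds H s v = 2 * c - 2 := by have := hmax v hvs; omega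
      have hdx : ds H s x = 2 * c - 2 := by
        have h1 := hmaxx v hvs
        have h2 := hmax x hx
        omega
      have hps := pair_sum_le H hx hvs (Ne.symm hvx) hsum
      rw [hdx, hdv] at hps
      omega
    · rw [if_neg had] at hcond
      have hle := F1 H hc hcard hsum hx hmaxx (hmax x hx) hvs hvx had
      exact ⟨hvs, hvx, had, by omega⟩
  have hyex : ∃ y ∈ t, ∀ v ∈ B, v ≠ y → H.Adj v y := by
    rcases B.eq_empty_or_nonempty with hBe | ⟨v₁, hv₁⟩
    · obtain ⟨y, hy⟩ := htne
      refine ⟨y, hy, fun v hv _ => ?_⟩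
      rw [hBe] at hv
      exact absurd hv (Finset.notMem_empty v)
    · by_cases hsing : ∀ w ∈ B, w = v₁
      · obtain ⟨hv1s, hv1x, hv1n, hd1⟩ := hBprop v₁ hv₁
        refine ⟨v₁, ?_, fun v hv hne => absurd (hsing v hv) hne⟩
        rw [ht, Finset.mem_filter, Finset.mem_erase]
        exact ⟨⟨hv1x, hv1s⟩, hv1n⟩
      · push_neg at hsing
        obtain ⟨v₂, hv₂, h21⟩ := hsing
        exfalso
        obtain ⟨hv1s, hv1x, hv1n, hd1⟩ := hBprop v₁ hv₁
        obtain ⟨hv2s, hv2x, hv2n, hd2⟩ := hBprop v₂ hv₂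
        have hdxge : 2 * c - 3 ≤ ds H s x := hd1 ▸ hmaxx v₁ hv1s
        have htr := triple_sum_le H hx hv1s hv2s (Ne.symm hv1x) (Ne.symm hv2x)
          (fun h => h21 h.symm) hsum
        have hcc : c = 3 := by
          rw [hd1, hd2] at htr
          omega
        subst hcc
        exact c3_impossible H (by omega) hsum hx hv1s hv2s hv1x hv2x
          (fun h => h21 h.symm) hmaxx (by omega) (by omega) hv1n hv2n
  obtain ⟨y, hyt, hyB⟩ := hyex
  obtain ⟨hys, hyx, hyn⟩ := htmem y hyt
  have hss1 : (s.erase x).erase y ⊆ s.erase x := Finset.erase_subset _ _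
  have hss2 : (s.erase x).erase y ⊆ s := fun z hz =>
    Finset.mem_of_mem_erase (Finset.mem_of_mem_erase hz)
  have hyex' : y ∈ s.erase x := Finset.mem_erase.mpr ⟨hyx, hys⟩
  refine ⟨x, hx, y, hys, fun h => hyx h.symm, hyn, ?_, ?_⟩
  · -- degree bound on the rest
    intro v hv
    have hvy : v ≠ y := (Finset.mem_erase.mp hv).1
    have hvx : v ≠ x := (Finset.mem_erase.mp (Finset.mem_of_mem_erase hv)).1
    have hvs : v ∈ s := hss2 hv
    by_cases hvB : v ∈ B
    · obtain ⟨_, _, hnvx, hdv⟩ := hBprop v hvB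
      have hady : H.Adj v y := hyB v hvB hvy
      have h1 : ds H ((s.erase x).erase y) v = ds H (s.erase x) v - 1 :=
        ds_erase_adj H hyex' hady
      have h2 : ds H (s.erase x) v = ds H s v :=
        ds_erase_nonadj H (fun h => hnvx h.symm)
      rw [h1, h2, hdv]
      omega
    · have hvB' : ¬ (if H.Adj x v then 2 * c - 2 ≤ ds H s v else 2 * c - 3 ≤ ds H s v) := by
        intro h
        exact hvB (by rw [hB, Finset.mem_filter]; exact ⟨Finset.mem_erase.mpr ⟨hvx, hvs⟩, h⟩)
      by_cases had : H.Adj x v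
      · rw [if_pos had] at hvB'
        push_neg at hvB'
        have h1 : ds H ((s.erase x).erase y) v ≤ ds H (s.erase x) v :=
          ds_le_of_subset H (Finset.erase_subset _ _) v
        have h2 : ds H (s.erase x) v = ds H s v - 1 := ds_erase_adj H hx had.symm
        omega
      · rw [if_neg had] at hvB'
        push_neg at hvB'
        have h1 : ds H ((s.erase x).erase y) v ≤ ds H s v := ds_le_of_subset H hss2 v
        omega
  · -- sum bound on the rest
    have hsplit : ds H s x / 2 + (ds H s y / 2 + ∑ v ∈ (s.erase x).erase y, ds H s v / 2)
        = ∑ v ∈ s, ds H s v / 2 := by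
      rw [Finset.add_sum_erase (s.erase x) (fun v => ds H s v / 2) hyex',
        Finset.add_sum_erase s (fun v => ds H s v / 2) hx]
    have hterm : ∑ v ∈ (s.erase x).erase y, ds H ((s.erase x).erase y) v / 2
        ≤ ∑ v ∈ (s.erase x).erase y, ds H s v / 2 :=
      Finset.sum_le_sum (fun v _ => Nat.div_le_div_right (ds_le_of_subset H hss2 v))
    by_cases hD : 2 ≤ ds H s x
    · omega
    · have hzero : ∑ v ∈ (s.erase x).erase y, ds H ((s.erase x).erase y) v / 2 = 0 := by
        apply Finset.sum_eq_zero
        intro v hv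
        have h1 : ds H ((s.erase x).erase y) v ≤ ds H s v := ds_le_of_subset H hss2 v
        have h2 := hmaxx v (hss2 hv)
        omega
      rw [hzero]
      omega


/-- main induction: a partition of `s` into non-adjacent pairs, given as an involution -/
lemma pairing (b : ℕ) : ∀ s : Finset V, s.card = 2 * b →
    (∀ v ∈ s, ds H s v ≤ 2 * b - 2) →
    (∑ v ∈ s, ds H s v / 2 ≤ b) →
    ∃ i : V → V, ∀ x ∈ s, i x ∈ s ∧ i x ≠ x ∧ i (i x) = x ∧ ¬ H.Adj x (i x) := by
  induction b with
  | zero =>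
    intro s hcard _ _
    have : s = ∅ := Finset.card_eq_zero.mp (by omega)
    subst this
    exact ⟨id, fun x hx => absurd hx (Finset.notMem_empty x)⟩
  | succ b ih =>
    intro s hcard hmax hsum
    rcases Nat.eq_zero_or_pos b with hb | hb
    · -- base case: s = {x, y}
      subst hb
      have hcard2 : s.card = 2 := by omega
      obtain ⟨x, y, hxy, hs⟩ := Finset.card_eq_two.mp hcard2
      have hx : x ∈ s := by rw [hs]; simp
      have hy : y ∈ s := by rw [hs]; simp
      have hnadj : ¬ H.Adj x y := by
        intro hadj
        have h1 : 0 < ds H s x := by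
          unfold ds
          exact Finset.card_pos.mpr ⟨y, (mem_inter_nbr H).mpr ⟨hy, hadj⟩⟩
        have h2 := hmax x hx
        omega
      have e1 := swapExtend_left x y id
      have e2 := swapExtend_right hxy id
      refine ⟨swapExtend x y id, ?_⟩
      intro z hz
      rw [hs] at hz
      rcases Finset.mem_insert.mp hz with rfl | hz
      · rw [e1, e2]
        exact ⟨hy, Ne.symm hxy, rfl, hnadj⟩
      · rcases Finset.mem_singleton.mp hz with rfl
        rw [e2, e1]
        exact ⟨hx, hxy, rfl, fun h => hnadj h.symm⟩
    · -- inductive step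
      have hc2 : 2 ≤ b + 1 := by omega
      obtain ⟨x, hx, y, hys, hxy, hnadj, hA, hB⟩ := select H (b + 1) hc2 s hcard hmax hsum
      have hsimp : b + 1 - 1 = b := rfl
      rw [hsimp] at hA hB
      have hyex' : y ∈ s.erase x := Finset.mem_erase.mpr ⟨fun h => hxy h.symm, hys⟩
      have hcard' : ((s.erase x).erase y).card = 2 * b := by
        rw [Finset.card_erase_of_mem hyex', Finset.card_erase_of_mem hx, hcard]
        omega
      obtain ⟨i', hi'⟩ := ih ((s.erase x).erase y) hcard' hA hB
      set s'' := (s.erase x).erase y with hs''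
      have hmem'' : ∀ z, z ∈ s'' ↔ z ∈ s ∧ z ≠ x ∧ z ≠ y := by
        intro z
        rw [hs'', Finset.mem_erase, Finset.mem_erase]
        tauto
      have e1 := swapExtend_left x y i'
      have e2 := swapExtend_right hxy i'
      have e3 : ∀ z, z ≠ x → z ≠ y → swapExtend x y i' z = i' z :=
        fun z h1 h2 => swapExtend_other h1 h2 i'
      refine ⟨swapExtend x y i', ?_⟩
      intro z hz
      by_cases hzx : z = x
      · subst hzx
        rw [e1, e2]
        exact ⟨hys, fun h => hxy h.symm, rfl, hnadj⟩
      by_cases hzy : z = y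
      · subst hzy
        rw [e2, e1]
        exact ⟨hx, hxy, rfl, fun h => hnadj h.symm⟩
      · have hz'' : z ∈ s'' := (hmem'' z).mpr ⟨hz, hzx, hzy⟩
        obtain ⟨hiz, hine, hinv, hinadj⟩ := hi' z hz''
        obtain ⟨hizs, hizx, hizy⟩ := (hmem'' (i' z)).mp hiz
        rw [e3 z hzx hzy, e3 (i' z) hizx hizy, hinv]
        exact ⟨hizs, hine, rfl, hinadj⟩


end EqThree

open EqThree Finset in

/-- Lemma 4.3(ii), the case `k = 3`: if `a ≥ 1` and `H` is a graph of order `2a` with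
maximum degree at most `2a - 2` and `∑_x ⌈(deg_H(x) - 1)/2⌉ ≤ a`, then `H` has a proper
colouring with `a` colours in which every colour class has exactly `2` vertices.
(Here `⌈(d-1)/2⌉ = ((d - 1) + 1)/2` in natural numbers, which equals the real ceiling
for every `d ≥ 0`.) -/
theorem equitable_colouring_k_three (a : ℕ) (ha : 1 ≤ a)
    (V : Type) [Fintype V] [DecidableEq V] (hV : Fintype.card V = 2 * a)
    (H : SimpleGraph V) [DecidableRel H.Adj]
    (hmax : ∀ x : V, H.degree x ≤ 2 * a - 2)
    (hsum : (∑ x : V, ((H.degree x - 1) + 1) / 2) ≤ a) :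
    ∃ φ : V → Fin a,
      (∀ x y : V, H.Adj x y → φ x ≠ φ y) ∧
      ∀ c : Fin a, (Finset.univ.filter (fun x => φ x = c)).card = 2 := by
  have hdeg : ∀ x : V, ds H Finset.univ x = H.degree x := by
    intro x
    unfold ds
    rw [Finset.univ_inter]
    rfl
  have hmax' : ∀ v ∈ (Finset.univ : Finset V), ds H Finset.univ v ≤ 2 * a - 2 := by
    intro v _; rw [hdeg]; exact hmax v
  have hsum' : ∑ v ∈ (Finset.univ : Finset V), ds H Finset.univ v / 2 ≤ a := by
    refine le_trans (le_of_eq ?_) hsum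
    apply Finset.sum_congr rfl
    intro v _
    rw [hdeg]
    omega
  have hcardu : (Finset.univ : Finset V).card = 2 * a := by
    rw [Finset.card_univ, hV]
  obtain ⟨i, hi⟩ := pairing H a Finset.univ hcardu hmax' hsum'
  have hne : ∀ x : V, i x ≠ x := fun x => (hi x (Finset.mem_univ x)).2.1
  have hinv : ∀ x : V, i (i x) = x := fun x => (hi x (Finset.mem_univ x)).2.2.1
  have hnadj : ∀ x : V, ¬ H.Adj x (i x) := fun x => (hi x (Finset.mem_univ x)).2.2.2
  let e : V ≃ Fin (2 * a) := Fintype.equivFinOfCardEq hV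
  have hene : ∀ x : V, (e (i x) : ℕ) ≠ (e x : ℕ) := by
    intro x h
    exact hne x (e.injective (Fin.ext h))
  set R : Finset V := Finset.univ.filter (fun x => (e x : ℕ) < (e (i x) : ℕ)) with hR
  set S : Finset V := Finset.univ.filter (fun x => ¬ (e x : ℕ) < (e (i x) : ℕ)) with hS
  have hcardRS : R.card + S.card = 2 * a := by
    rw [hR, hS]
    rw [Finset.card_filter_add_card_filter_not, hcardu]
  have hcardR : R.card = S.card := by
    apply Finset.card_bij (fun x _ => i x)
    · intro x hxR
      rw [hR, Finset.mem_filter] at hxR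
      rw [hS, Finset.mem_filter]
      refine ⟨Finset.mem_univ _, ?_⟩
      rw [hinv]
      omega
    · intro x hx y hy hxy
      have : i (i x) = i (i y) := by rw [hxy]
      rwa [hinv, hinv] at this
    · intro y hyS
      rw [hS, Finset.mem_filter] at hyS
      refine ⟨i y, ?_, hinv y⟩
      rw [hR, Finset.mem_filter, hinv]
      refine ⟨Finset.mem_univ _, ?_⟩
      have := hene y
      omega
  have hcardRa : R.card = a := by omega
  let g : {x // x ∈ R} ≃ Fin a := Finset.equivFinOfCardEq hcardRa
  -- the canonical representative of the pair of x
  have hrepmem : ∀ x : V, (if (e x : ℕ) < (e (i x) : ℕ) then x else i x) ∈ R := by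
    intro x
    by_cases h : (e x : ℕ) < (e (i x) : ℕ)
    · rw [if_pos h, hR, Finset.mem_filter]
      exact ⟨Finset.mem_univ _, h⟩
    · rw [if_neg h, hR, Finset.mem_filter]
      refine ⟨Finset.mem_univ _, ?_⟩
      rw [hinv]
      have := hene x
      omega
  set rep : V → V := fun x => if (e x : ℕ) < (e (i x) : ℕ) then x else i x with hrepdef
  have hrep_or : ∀ x : V, rep x = x ∨ rep x = i x := by
    intro x
    rw [hrepdef]
    by_cases h : (e x : ℕ) < (e (i x) : ℕ)
    · left; simp [h]
    · right; simp [h]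
  have hx_or : ∀ x : V, x = rep x ∨ x = i (rep x) := by
    intro x
    rcases hrep_or x with h | h
    · left; exact h.symm
    · right; rw [h, hinv]
  have hrep_i : ∀ x : V, rep (i x) = rep x := by
    intro x
    rw [hrepdef]
    simp only [hinv]
    by_cases h : (e x : ℕ) < (e (i x) : ℕ)
    · rw [if_pos h, if_neg (by omega)]
    · have := hene x
      rw [if_neg h, if_pos (by omega)]
  have hrepR : ∀ x : V, rep x ∈ R := fun x => hrepmem x
  refine ⟨fun x => g ⟨rep x, hrepR x⟩, ?_, ?_⟩
  · intro x y hadj hfeq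
    have hrxy : rep x = rep y := by
      have := g.injective hfeq
      exact congrArg Subtype.val this
    have hxyne : x ≠ y := H.ne_of_adj hadj
    rcases hx_or x with h1 | h1 <;> rcases hx_or y with h2 | h2
    · exact hxyne (by rw [h1, h2, hrxy])
    · have : y = i x := by rw [h2, ← hrxy, ← h1]
      exact hnadj x (this ▸ hadj)
    · have : x = i y := by rw [h1, hrxy, ← h2]
      exact hnadj y (this ▸ hadj.symm)
    · exact hxyne (by rw [h1, h2, hrxy])
  · intro c
    set r : V := (g.symm c : {x // x ∈ R}).1 with hr
    have hrR : r ∈ R := (g.symm c).2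
    have hrlt : (e r : ℕ) < (e (i r) : ℕ) := by
      rw [hR] at hrR
      exact (Finset.mem_filter.mp hrR).2
    have hrep_r : rep r = r := by rw [hrepdef]; simp [hrlt]
    have hrep_ir : rep (i r) = r := by rw [hrep_i, hrep_r]
    have hfilter : Finset.univ.filter (fun x => g ⟨rep x, hrepR x⟩ = c) = {r, i r} := by
      ext z
      simp only [Finset.mem_filter, Finset.mem_univ, true_and, Finset.mem_insert,
        Finset.mem_singleton]
      constructor
      · intro hz
        have hsub : (⟨rep z, hrepR z⟩ : {x // x ∈ R}) = g.symm c := by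
          rw [← hz, Equiv.symm_apply_apply]
        have hrz : rep z = r := by
          rw [hr]
          exact congrArg Subtype.val hsub
        rcases hx_or z with h | h
        · left; rw [h, hrz]
        · right; rw [h, hrz]
      · rintro (rfl | rfl)
        · have : (⟨rep r, hrepR r⟩ : {x // x ∈ R}) = g.symm c := by
            rw [hr] at hrep_r ⊢
            exact Subtype.ext hrep_r
          rw [this, Equiv.apply_symm_apply]
        · have : (⟨rep (i r), hrepR (i r)⟩ : {x // x ∈ R}) = g.symm c := by
            rw [hr] at hrep_ir ⊢
            exact Subtype.ext hrep_ir
          rw [this, Equiv.apply_symm_apply]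
    rw [hfilter]
    exact Finset.card_pair (Ne.symm (hne r))
end

section
/- Let k ≥ 6 be an integer with k ≡ 2 (mod 4) and let a = (k² + 3k − 2)/4. Then the graph G of order a(k−1) consisting of a copy of the complete graph K_{k(k−1)/2 + 1} together with isolated vertices has exactly (a − k + 1)·C(k,2) edges, is K_k-divisible, and has no proper colouring with a colours, where C(k,2) = k(k−1)/2. -/
/-- The graph of order `a(k-1)` consisting of a copy of the complete graph
`K_{k(k-1)/2 + 1}` (on the vertices with value `< k(k-1)/2 + 1`) together with
isolated vertices. -/
def cliquePlusIsolated (k a : ℕ) : SimpleGraph (Fin (a * (k - 1))) :=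
  SimpleGraph.fromRel (fun x y =>
    x.val < k * (k - 1) / 2 + 1 ∧ y.val < k * (k - 1) / 2 + 1)


/-! With `c = k(k-1)/2`, the graph is the complete graph on `c + 1` vertices plus isolated
vertices, so it has `(c+1)c/2` edges and its degrees are `c` and `0`. The relation
`4a = k² + 3k - 2` is exactly what makes `2(a - k + 1) = c + 1`, so the edge count is
`(a - k + 1)c`; `k` even gives `(k - 1) ∣ c`; and once `k ≥ 4` the clique on `c + 1 > a`
vertices cannot be coloured with `a` colours. -/

open Finset SimpleGraph

namespace SimpleGraph

variable {V : Type*} {s : Finset V} {x y : V}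

def cliqueOn (s : Finset V) : SimpleGraph V :=
  fromRel fun x y => x ∈ s ∧ y ∈ s

theorem cliqueOn_adj : (cliqueOn s).Adj x y ↔ x ≠ y ∧ x ∈ s ∧ y ∈ s := by
  simp only [cliqueOn, fromRel_adj, and_comm (a := y ∈ s), or_self]

theorem isClique_cliqueOn (s : Finset V) : (cliqueOn s).IsClique s :=
  fun _ hx _ hy hxy => cliqueOn_adj.mpr ⟨hxy, hx, hy⟩

theorem neighborSet_cliqueOn_of_mem [DecidableEq V] (hx : x ∈ s) :
    (cliqueOn s).neighborSet x = ↑(s.erase x) := by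
  ext y
  simp [cliqueOn_adj, hx, ne_comm, and_comm]

theorem neighborSet_cliqueOn_of_notMem (hx : x ∉ s) : (cliqueOn s).neighborSet x = ∅ := by
  ext y
  simp [cliqueOn_adj, hx]

theorem edgeSet_cliqueOn [DecidableEq V] :
    (cliqueOn s).edgeSet = ↑(s.offDiag.image Sym2.mk.uncurry) := by
  ext ⟨x, y⟩
  simp only [mem_edgeSet, cliqueOn_adj, coe_image, Set.mem_image, mem_coe, mem_offDiag]
  aesop

theorem ncard_edgeSet_cliqueOn : (cliqueOn s).edgeSet.ncard = (#s).choose 2 := by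
  classical
  rw [edgeSet_cliqueOn, Set.ncard_coe_finset, Sym2.card_image_offDiag]

theorem kkDivisible_cliqueOn {k : ℕ} (hedge : k * (k - 1) / 2 ∣ (#s).choose 2)
    (hdeg : k - 1 ∣ #s - 1) : KkDivisible k (cliqueOn s) := by
  classical
  refine ⟨by rwa [ncard_edgeSet_cliqueOn], fun x => ?_⟩
  by_cases hx : x ∈ s
  · rwa [neighborSet_cliqueOn_of_mem hx, Set.ncard_coe_finset, card_erase_of_mem hx]
  · simp [neighborSet_cliqueOn_of_notMem hx]

end SimpleGraph

theorem cliquePlusIsolated_eq_cliqueOn (k a : ℕ) :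
    cliquePlusIsolated k a = cliqueOn {x | x.val < k * (k - 1) / 2 + 1} := by
  ext x y
  simp [cliquePlusIsolated, cliqueOn]

theorem two_mul_sub_add_one_eq {k a : ℕ} (hk : 1 ≤ k) (ha : 4 * a = k ^ 2 + 3 * k - 2) :
    2 * (a - k + 1) = k * (k - 1) / 2 + 1 := by
  obtain ⟨c, hc⟩ := Nat.even_mul_pred_self k
  have hsq : k ^ 2 = k * (k - 1) + k := by
    cases k with
    | zero => omega
    | succ j => simp [pow_two, Nat.succ_mul, Nat.mul_succ]
  omega

theorem sub_one_dvd_mul_sub_one_div_two {k : ℕ} (hk : Even k) : k - 1 ∣ k * (k - 1) / 2 := by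
  obtain ⟨j, rfl⟩ := hk
  exact ⟨j, by rw [← two_mul, mul_assoc, Nat.mul_div_cancel_left _ two_pos, mul_comm]⟩

theorem lt_mul_sub_one_div_two_add_one {k a : ℕ} (hk : 4 ≤ k)
    (ha : 4 * a = k ^ 2 + 3 * k - 2) : a < k * (k - 1) / 2 + 1 := by
  have hc := Nat.two_mul_div_two_of_even (Nat.even_mul_pred_self k)
  zify [show 1 ≤ k by omega, show 2 ≤ k ^ 2 + 3 * k by nlinarith] at *
  nlinarith

theorem mul_sub_one_div_two_add_one_le {k a : ℕ} (hk : 2 ≤ k)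
    (ha : 4 * a = k ^ 2 + 3 * k - 2) : k * (k - 1) / 2 + 1 ≤ a * (k - 1) := by
  have hc := Nat.two_mul_div_two_of_even (Nat.even_mul_pred_self k)
  zify [show 1 ≤ k by omega, show 2 ≤ k ^ 2 + 3 * k by nlinarith] at *
  nlinarith

/-- For `k ≥ 6` with `k ≡ 2 (mod 4)` and `a = (k² + 3k - 2)/4`, the graph of order
`a(k-1)` consisting of `K_{k(k-1)/2+1}` plus isolated vertices has exactly
`(a - k + 1)·C(k,2)` edges, is `K_k`-divisible, but has no proper colouring with
`a` colours. -/
theorem cliquePlusIsolated_properties (k a : ℕ) (hk : 6 ≤ k) (hkmod : k % 4 = 2)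
    (ha : 4 * a = k ^ 2 + 3 * k - 2) :
    (cliquePlusIsolated k a).edgeSet.ncard = (a - k + 1) * (k * (k - 1) / 2) ∧
    KkDivisible k (cliquePlusIsolated k a) ∧
    ¬ ∃ φ : Fin (a * (k - 1)) → Fin a,
        ∀ x y, (cliquePlusIsolated k a).Adj x y → φ x ≠ φ y := by
  set c := k * (k - 1) / 2
  have hcard : #{x : Fin (a * (k - 1)) | x.val < c + 1} = c + 1 := by
    rw [Fin.card_filter_val_lt, min_eq_right (mul_sub_one_div_two_add_one_le (by omega) ha)]
  have hedges : (c + 1).choose 2 = (a - k + 1) * c := by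
    rw [Nat.choose_two_right, add_tsub_cancel_right, ← two_mul_sub_add_one_eq (by omega) ha,
      mul_assoc, Nat.mul_div_cancel_left _ two_pos]
  rw [cliquePlusIsolated_eq_cliqueOn]
  refine ⟨by rw [ncard_edgeSet_cliqueOn, hcard, hedges], ?_, ?_⟩
  · refine kkDivisible_cliqueOn (by rw [hcard, hedges]; exact dvd_mul_left _ _) ?_
    rw [hcard, add_tsub_cancel_right]
    exact sub_one_dvd_mul_sub_one_div_two (Nat.even_iff.mpr (by omega))
  · rintro ⟨φ, hφ⟩
    have hle := (isClique_cliqueOn _).card_le_of_coloring (Coloring.mk φ fun h => hφ _ _ h)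
    rw [hcard, Fintype.card_fin] at hle
    exact (lt_mul_sub_one_div_two_add_one (by omega) ha).not_ge hle
end
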